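/- arXiv:2302.13630 — 4 statements merged into one kernel-verified Lean document; each statement's English description precedes it below -/
import Mathlib

section
/- Let s : E → M be a locally trivial continuous Banach bundle over a locally compact Hausdorff space M, and let F ⊂ E be a subset such that F ∩ E_m is a linear subspace of E_m for every m ∈ M. Then the restriction s|_F : F → M is a locally trivial vector bundle if and only if F is closed in E and s|_F is an open map. -/
open Topology

universe u v

variable {M : Type u} [TopologicalSpace M]

/-- A continuous Banach bundle over `M` (total space `Σ m, F m` with a given topology). -/
structure IsContinuousBanachBundle (F : M → Type v) [∀ m, NormedAddCommGroup (F m)]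
    [∀ m, NormedSpace ℂ (F m)] [∀ m, CompleteSpace (F m)]
    [TopologicalSpace (Σ m, F m)] : Prop where
  continuous_proj : Continuous (Sigma.fst : (Σ m, F m) → M)
  isOpenMap_proj : IsOpenMap (Sigma.fst : (Σ m, F m) → M)
  continuous_add : @Continuous (Σ m, F m × F m) (Σ m, F m)
    (TopologicalSpace.induced
      (fun vw : Σ m, F m × F m =>
        ((⟨vw.1, vw.2.1⟩ : Σ m, F m), (⟨vw.1, vw.2.2⟩ : Σ m, F m)))
      inferInstance)
    inferInstance
    (fun vw => ⟨vw.1, vw.2.1 + vw.2.2⟩)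
  continuous_smul : Continuous
    (fun cv : ℂ × (Σ m, F m) => (⟨cv.2.1, cv.1 • cv.2.2⟩ : Σ m, F m))
  continuous_norm : Continuous (fun v : Σ m, F m => ‖v.2‖)
  nhds_basis_zero : ∀ (m : M) (V : Set (Σ m', F m')),
    V ∈ 𝓝 (⟨m, 0⟩ : Σ m', F m') →
      ∃ O ∈ 𝓝 m, ∃ ε > (0 : ℝ), {v : Σ m', F m' | v.1 ∈ O ∧ ‖v.2‖ < ε} ⊆ V

/-- Local triviality of a continuous Banach bundle (with norm equivalence). -/
def IsLocallyTrivialBanachBundle (F : M → Type v) [∀ m, NormedAddCommGroup (F m)]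
    [∀ m, NormedSpace ℂ (F m)] [TopologicalSpace (Σ m, F m)] : Prop :=
  ∀ m₀ : M, ∃ C : Set M, IsCompact C ∧ C ∈ 𝓝 m₀ ∧ ∃ (d : ℕ)
    (Φ : {v : Σ m, F m // v.1 ∈ C} ≃ₜ C × EuclideanSpace ℂ (Fin d)),
      (∀ v, ((Φ v).1 : M) = v.1.1) ∧
      (∀ (m : M) (hm : m ∈ C) (x y : F m),
        (Φ ⟨⟨m, x + y⟩, hm⟩).2 = (Φ ⟨⟨m, x⟩, hm⟩).2 + (Φ ⟨⟨m, y⟩, hm⟩).2) ∧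
      (∀ (m : M) (hm : m ∈ C) (c : ℂ) (x : F m),
        (Φ ⟨⟨m, c • x⟩, hm⟩).2 = c • (Φ ⟨⟨m, x⟩, hm⟩).2) ∧
      ∃ c₁ c₂ : ℝ, 0 < c₁ ∧ 0 < c₂ ∧
        ∀ v : {v : Σ m, F m // v.1 ∈ C},
          c₁ * ‖v.1.2‖ ≤ ‖(Φ v).2‖ ∧ ‖(Φ v).2‖ ≤ c₂ * ‖v.1.2‖

/-- Local triviality of a vector bundle in the usual sense (no norm condition). -/
def IsLocallyTrivialVectorBundle (F : M → Type v) [∀ m, AddCommGroup (F m)]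
    [∀ m, Module ℂ (F m)] [TopologicalSpace (Σ m, F m)] : Prop :=
  ∀ m₀ : M, ∃ C : Set M, IsCompact C ∧ C ∈ 𝓝 m₀ ∧ ∃ (d : ℕ)
    (Φ : {v : Σ m, F m // v.1 ∈ C} ≃ₜ C × EuclideanSpace ℂ (Fin d)),
      (∀ v, ((Φ v).1 : M) = v.1.1) ∧
      (∀ (m : M) (hm : m ∈ C) (x y : F m),
        (Φ ⟨⟨m, x + y⟩, hm⟩).2 = (Φ ⟨⟨m, x⟩, hm⟩).2 + (Φ ⟨⟨m, y⟩, hm⟩).2) ∧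
      (∀ (m : M) (hm : m ∈ C) (c : ℂ) (x : F m),
        (Φ ⟨⟨m, c • x⟩, hm⟩).2 = c • (Φ ⟨⟨m, x⟩, hm⟩).2)


/-!
Work in a trivialization `Φ` of `E` over a compact neighbourhood `C`, where the fibres of `F`
become a family of subspaces `V p ⊆ ℂ^d`, `p ∈ C`.

If `F` is locally trivial, its norm-bounded parts over a compact set are compact, so `F` is closed
in the Hausdorff space `E`; and the projection of a locally trivial bundle is open.

Conversely, closedness of `F` makes the graph of `V` closed, and compactness of the unit sphere then
gives `‖ξ‖ ≤ 2 ‖P ξ‖` for `ξ ∈ V p` and `p` near `p₀`, where `P` is the orthogonal projection onto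
`V p₀`. Openness of `F → M` makes `V` lower semicontinuous, so near `p₀` the subspace `V p` contains
vectors close to a basis of `V p₀`, and `P` maps it onto `V p₀`. Thus `(p, ξ) ↦ (p, P ξ)`
trivializes `F` near `p₀`; the norm bound makes this map proper, hence a homeomorphism.
-/

open Filter Set Function Module

theorem t2Space_of_forall_t2Space_preimage {X Y : Type*} [TopologicalSpace X]
    [TopologicalSpace Y] [T2Space Y] {π : X → Y} (hπ : Continuous π)
    (h : ∀ y, ∃ C ∈ 𝓝 y, T2Space (π ⁻¹' C)) : T2Space X := by
  refine t2Space_iff_disjoint_nhds.2 fun x x' hne => ?_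
  by_cases hπx : π x = π x'
  · obtain ⟨C, hC, hT2⟩ := h (π x)
    have hx : π x ∈ C := mem_of_mem_nhds hC
    have hx' : π x' ∈ C := hπx ▸ hx
    have hCx : π ⁻¹' C ∈ 𝓝 x := hπ.continuousAt.preimage_mem_nhds hC
    have hCx' : π ⁻¹' C ∈ 𝓝 x' := hπ.continuousAt.preimage_mem_nhds (hπx ▸ hC)
    have := (disjoint_map Subtype.val_injective).2
      (disjoint_nhds_nhds.2 (Subtype.coe_ne_coe.1 hne : (⟨x, hx⟩ : π ⁻¹' C) ≠ ⟨x', hx'⟩))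
    rwa [map_nhds_subtype_val, map_nhds_subtype_val, nhdsWithin_eq_nhds.2 hCx,
      nhdsWithin_eq_nhds.2 hCx'] at this
  · exact (hπ.tendsto x).disjoint (disjoint_nhds_nhds.2 hπx) (hπ.tendsto x')

theorem Topology.IsInducing.subtypeMap {X Y : Type*} [TopologicalSpace X] [TopologicalSpace Y]
    {f : X → Y} (hf : IsInducing f) {p : X → Prop} {q : Y → Prop} (h : ∀ x, p x → q (f x)) :
    IsInducing (Subtype.map f h) :=
  IsInducing.subtypeVal.of_comp_iff.1 (hf.comp IsInducing.subtypeVal)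

theorem isClosed_of_forall_exists_inter_subset {X : Type*} [TopologicalSpace X] {s : Set X}
    (h : ∀ x ∈ closure s, ∃ N ∈ 𝓝 x, ∃ K, IsClosed K ∧ K ⊆ s ∧ s ∩ N ⊆ K) : IsClosed s := by
  refine isClosed_of_closure_subset fun x hx => ?_
  obtain ⟨N, hN, K, hK, hKs, hsK⟩ := h x hx
  refine hKs (hK.closure_subset (mem_closure_iff_nhds.2 fun t ht => ?_))
  obtain ⟨y, ⟨hyt, hyN⟩, hys⟩ := mem_closure_iff_nhds.1 hx (t ∩ N) (inter_mem ht hN)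
  exact ⟨y, hyt, hsK ⟨hys, hyN⟩⟩

theorem exists_pos_mul_norm_le_of_homogeneous {K 𝕜 E : Type*} [TopologicalSpace K]
    [CompactSpace K] [RCLike 𝕜] [NormedAddCommGroup E] [NormedSpace 𝕜 E] [ProperSpace E]
    {f : K × E → ℝ} (hf : Continuous f) (hsmul : ∀ p ξ (c : 𝕜), f (p, c • ξ) = ‖c‖ * f (p, ξ))
    (hpos : ∀ p ξ, ξ ≠ 0 → 0 < f (p, ξ)) : ∃ c > 0, ∀ p ξ, c * ‖ξ‖ ≤ f (p, ξ) := by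
  obtain ⟨c, hc, hcf⟩ := (isCompact_univ.prod (isCompact_sphere (0 : E) 1)).exists_forall_le'
    hf.continuousOn (a := 0) fun q hq => hpos q.1 q.2 (ne_zero_of_mem_unit_sphere ⟨q.2, hq.2⟩)
  refine ⟨c, hc, fun p ξ => ?_⟩
  rcases eq_or_ne ξ 0 with rfl | hξ
  · have : f (p, 0) = 0 := by simpa using hsmul p 0 0
    simp [this]
  have hunit : ‖(‖ξ‖⁻¹ : 𝕜) • ξ‖ = 1 := norm_smul_inv_norm hξ
  have := hcf (p, (‖ξ‖⁻¹ : 𝕜) • ξ) ⟨mem_univ _, by simpa using hunit⟩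
  rwa [hsmul, norm_inv, RCLike.norm_ofReal, abs_norm, inv_mul_eq_div,
    le_div_iff₀ (norm_pos_iff.2 hξ)] at this

section SubspaceFamily

variable {𝕜 B E : Type*} [RCLike 𝕜] [TopologicalSpace B] [NormedAddCommGroup E]
  [InnerProductSpace 𝕜 E] [FiniteDimensional 𝕜 E] {V : B → Submodule 𝕜 E} {b₀ : B}

theorem eventually_norm_le_two_mul_norm_orthogonalProjectionOnto
    (hV : IsClosed {q : B × E | q.2 ∈ V q.1}) :
    ∀ᶠ b in 𝓝 b₀, ∀ ξ ∈ V b, ‖ξ‖ ≤ 2 * ‖(V b₀).orthogonalProjectionOnto ξ‖ := by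
  have := FiniteDimensional.proper_rclike 𝕜 E
  set P := (V b₀).orthogonalProjectionOnto
  have hunit : ∀ᶠ b in 𝓝 b₀, ∀ ξ ∈ Metric.sphere (0 : E) 1, ξ ∈ V b → ‖ξ‖ < 2 * ‖P ξ‖ := by
    refine (isCompact_sphere 0 1).eventually_forall_of_forall_eventually fun ξ hξ => ?_
    by_cases hξV : ξ ∈ V b₀
    · have hlt : ‖ξ‖ < 2 * ‖P ξ‖ := by
        rw [Submodule.norm_orthogonalProjectionOnto_apply _ hξV, mem_sphere_zero_iff_norm.1 hξ]
        norm_num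
      have hcont : Continuous fun z : B × E => 2 * ‖P z.2‖ :=
        continuous_const.mul (P.continuous.comp continuous_snd).norm
      exact ((continuous_snd.norm.continuousAt).eventually_lt hcont.continuousAt hlt).mono
        fun z hz _ => hz
    · exact eventually_of_mem (hV.isOpen_compl.mem_nhds (show (b₀, ξ) ∉ _ from hξV))
        fun z hz hzV => absurd hzV hz
  filter_upwards [hunit] with b hb ξ hξ
  rcases eq_or_ne ξ 0 with rfl | hξ0
  · simp
  have hunit := norm_smul_inv_norm (𝕜 := 𝕜) hξ0
  have := hb _ (mem_sphere_zero_iff_norm.2 hunit) (Submodule.smul_mem _ _ hξ)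
  rw [hunit, map_smul, norm_smul, norm_inv, RCLike.norm_ofReal, abs_norm] at this
  rw [← div_eq_inv_mul, mul_div_assoc', lt_div_iff₀ (norm_pos_iff.2 hξ0), one_mul] at this
  exact this.le

theorem eventually_map_orthogonalProjectionOnto_eq_top
    (hV : ∀ ξ ∈ V b₀, ∀ t ∈ 𝓝 ξ, ∀ᶠ b in 𝓝 b₀, ((V b : Set E) ∩ t).Nonempty) :
    ∀ᶠ b in 𝓝 b₀, (V b).map ((V b₀).orthogonalProjectionOnto : E →ₗ[𝕜] V b₀) = ⊤ := by
  set P := (V b₀).orthogonalProjectionOnto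
  let e := finBasis 𝕜 (V b₀)
  have hindep : ∀ᶠ f in 𝓝 (fun i => (e i : E)), LinearIndependent 𝕜 (P ∘ f) := by
    have hcont : Continuous fun f : Fin (finrank 𝕜 (V b₀)) → E => P ∘ f :=
      continuous_pi fun i => P.continuous.comp (continuous_apply i)
    have hPe : P ∘ (fun i => (e i : E)) = e :=
      funext fun i => Submodule.orthogonalProjectionOnto_mem_subspace_eq_self (e i)
    exact hcont.continuousAt.eventually (hPe ▸ e.linearIndependent.eventually)
  rw [nhds_pi] at hindep
  obtain ⟨I, -, t, ht, hsub⟩ := Filter.mem_pi.1 hindep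
  filter_upwards [eventually_all.2 fun i => hV _ (e i).2 _ (ht i)] with b hb
  choose ξ hξV hξt using hb
  have hli : LinearIndependent 𝕜 (P ∘ ξ) := hsub fun i _ => hξt i
  rw [eq_top_iff, ← hli.span_eq_top_of_card_eq_finrank' (by simp), Submodule.span_le]
  rintro _ ⟨i, rfl⟩
  exact ⟨ξ i, hξV i, rfl⟩

end SubspaceFamily

section Trivialization

variable {A : M → Type*} [∀ m, AddCommGroup (A m)] [∀ m, Module ℂ (A m)]
  [TopologicalSpace (Σ m, A m)] {C : Set M} {G : Type*} [AddCommGroup G] [Module ℂ G]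
  [TopologicalSpace G]

structure IsLinearTrivialization (Φ : {v : Σ m, A m // v.1 ∈ C} ≃ₜ C × G) : Prop where
  coe_fst : ∀ v, ((Φ v).1 : M) = v.1.1
  map_add : ∀ (m : M) (hm : m ∈ C) (x y : A m),
    (Φ ⟨⟨m, x + y⟩, hm⟩).2 = (Φ ⟨⟨m, x⟩, hm⟩).2 + (Φ ⟨⟨m, y⟩, hm⟩).2
  map_smul : ∀ (m : M) (hm : m ∈ C) (c : ℂ) (x : A m),
    (Φ ⟨⟨m, c • x⟩, hm⟩).2 = c • (Φ ⟨⟨m, x⟩, hm⟩).2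

theorem isLocallyTrivialVectorBundle_iff :
    IsLocallyTrivialVectorBundle A ↔ ∀ m₀ : M, ∃ C : Set M, IsCompact C ∧ C ∈ 𝓝 m₀ ∧ ∃ (d : ℕ)
      (Φ : {v : Σ m, A m // v.1 ∈ C} ≃ₜ C × EuclideanSpace ℂ (Fin d)),
        IsLinearTrivialization Φ :=
  forall_congr' fun _ => exists_congr fun _ => and_congr_right' <| and_congr_right' <|
    exists_congr fun _ => exists_congr fun _ =>
      ⟨fun ⟨h₁, h₂, h₃⟩ => ⟨h₁, h₂, h₃⟩, fun ⟨h₁, h₂, h₃⟩ => ⟨h₁, h₂, h₃⟩⟩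

namespace IsLinearTrivialization

variable {Φ : {v : Σ m, A m // v.1 ∈ C} ≃ₜ C × G} (hΦ : IsLinearTrivialization Φ)

def linearMap (p : C) : A p →ₗ[ℂ] G where
  toFun x := (Φ ⟨⟨p, x⟩, p.2⟩).2
  map_add' := hΦ.map_add p p.2
  map_smul' := hΦ.map_smul p p.2

theorem apply_mk (p : C) (x : A p) : Φ ⟨⟨p, x⟩, p.2⟩ = (p, hΦ.linearMap p x) :=
  Prod.ext (Subtype.ext (hΦ.coe_fst _)) rfl

theorem symm_apply (p : C) (x : A p) : Φ.symm (p, hΦ.linearMap p x) = ⟨⟨p, x⟩, p.2⟩ := by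
  rw [← hΦ.apply_mk, Φ.symm_apply_apply]

theorem linearMap_injective (p : C) : Injective (hΦ.linearMap p) := fun x y h => by
  have := congrArg (fun ξ => Φ.symm (p, ξ)) h
  simpa [hΦ.symm_apply] using this

theorem linearMap_surjective (p : C) : Surjective (hΦ.linearMap p) := fun ξ => by
  obtain ⟨⟨⟨m, x⟩, hm⟩, h⟩ := Φ.surjective (p, ξ)
  rw [hΦ.apply_mk ⟨m, hm⟩ x] at h
  obtain ⟨rfl, rfl⟩ := Prod.mk.inj h
  exact ⟨x, rfl⟩

def mapSubmodule (W : ∀ m, Submodule ℂ (A m)) (p : C) : Submodule ℂ G :=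
  (W p).map (hΦ.linearMap p)

variable {W : ∀ m, Submodule ℂ (A m)}

theorem mem_mapSubmodule_iff (q : C × G) :
    q.2 ∈ hΦ.mapSubmodule W q.1 ↔ (Φ.symm q).1.2 ∈ W (Φ.symm q).1.1 := by
  obtain ⟨p, ξ⟩ := q
  obtain ⟨x, rfl⟩ := hΦ.linearMap_surjective p ξ
  rw [hΦ.symm_apply]
  exact ⟨fun ⟨y, hy, hyx⟩ => hΦ.linearMap_injective p hyx ▸ hy, fun hx => ⟨x, hx, rfl⟩⟩

theorem isClosed_setOf_mem_mapSubmodule (hW : IsClosed {v : Σ m, A m | v.2 ∈ W v.1}) :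
    IsClosed {q : C × G | q.2 ∈ hΦ.mapSubmodule W q.1} := by
  convert hW.preimage (continuous_subtype_val.comp Φ.symm.continuous) using 1
  ext q
  exact hΦ.mem_mapSubmodule_iff q

theorem eventually_nonempty_mapSubmodule_inter [TopologicalSpace (Σ m, W m)]
    (hι : IsInducing fun v : Σ m, W m => (⟨v.1, v.2⟩ : Σ m, A m))
    (hW : IsOpenMap (Sigma.fst : (Σ m, W m) → M)) {p₀ : C} {ξ : G}
    (hξ : ξ ∈ hΦ.mapSubmodule W p₀) {t : Set G} (ht : t ∈ 𝓝 ξ) :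
    ∀ᶠ p in 𝓝 p₀, ((hΦ.mapSubmodule W p : Set G) ∩ t).Nonempty := by
  obtain ⟨x₀, hx₀, rfl⟩ := hξ
  obtain ⟨O, hO, hOΦ⟩ := isOpen_induced_iff.1
    ((isOpen_interior.preimage continuous_snd).preimage Φ.continuous :
      IsOpen (Φ ⁻¹' (Prod.snd ⁻¹' interior t)))
  have hx₀O : (⟨⟨p₀, x₀⟩, p₀.2⟩ : {v : Σ m, A m // v.1 ∈ C}) ∈ Subtype.val ⁻¹' O := by
    rw [hOΦ, mem_preimage, hΦ.apply_mk]
    exact mem_interior_iff_mem_nhds.2 ht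
  have := continuous_subtype_val.continuousAt.preimage_mem_nhds
    ((hW _ (hO.preimage hι.continuous)).mem_nhds ⟨⟨p₀, ⟨x₀, hx₀⟩⟩, hx₀O, rfl⟩)
  filter_upwards [this] with ⟨m, hm⟩ ⟨⟨m', y⟩, hyO, hm'⟩
  obtain rfl : m' = m := hm'
  have : (⟨⟨m', y⟩, hm⟩ : {v : Σ m, A m // v.1 ∈ C}) ∈ Φ ⁻¹' (Prod.snd ⁻¹' interior t) := by
    rw [← hOΦ]
    exact hyO
  rw [mem_preimage, hΦ.apply_mk ⟨m', hm⟩] at this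
  exact ⟨_, ⟨y, y.2, rfl⟩, interior_subset this⟩

end IsLinearTrivialization

end Trivialization

namespace IsLocallyTrivialVectorBundle

variable {A : M → Type*} [∀ m, AddCommGroup (A m)] [∀ m, Module ℂ (A m)]
  [TopologicalSpace (Σ m, A m)]

theorem t2Space [T2Space M] (hA : IsLocallyTrivialVectorBundle A)
    (hπ : Continuous (Sigma.fst : (Σ m, A m) → M)) : T2Space (Σ m, A m) :=
  t2Space_of_forall_t2Space_preimage hπ fun m => by
    obtain ⟨C, -, hC, d, Φ, -⟩ := hA m
    exact ⟨C, hC, Φ.isEmbedding.t2Space⟩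

theorem isOpenMap_fst (hA : IsLocallyTrivialVectorBundle A) :
    IsOpenMap (Sigma.fst : (Σ m, A m) → M) := by
  intro U hU
  rw [isOpen_iff_mem_nhds]
  rintro _ ⟨x, hxU, rfl⟩
  obtain ⟨C, -, hC, d, Φ, hfst, -⟩ := hA x.1
  have hopen : IsOpen (Prod.fst '' (Φ '' (Subtype.val ⁻¹' U))) :=
    _root_.isOpenMap_fst _ (Φ.isOpenMap _ (hU.preimage continuous_subtype_val))
  have hxC : x.1 ∈ C := mem_of_mem_nhds hC
  have hx : (⟨x.1, hxC⟩ : C) ∈ Prod.fst '' (Φ '' (Subtype.val ⁻¹' U)) :=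
    ⟨Φ ⟨x, hxC⟩, ⟨⟨x, hxC⟩, hxU, rfl⟩, Subtype.ext (hfst _)⟩
  have := mem_nhds_subtype_iff_nhdsWithin.1 (hopen.mem_nhds hx)
  rw [nhdsWithin_eq_nhds.2 hC] at this
  refine mem_of_superset this ?_
  rintro _ ⟨_, ⟨_, ⟨v, hvU, rfl⟩, rfl⟩, rfl⟩
  exact ⟨v.1, hvU, (hfst v).symm⟩

end IsLocallyTrivialVectorBundle

theorem IsLocallyTrivialBanachBundle.isLocallyTrivialVectorBundle {F : M → Type*}
    [∀ m, NormedAddCommGroup (F m)] [∀ m, NormedSpace ℂ (F m)] [TopologicalSpace (Σ m, F m)]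
    (hF : IsLocallyTrivialBanachBundle F) : IsLocallyTrivialVectorBundle F := fun m₀ =>
  let ⟨C, hCc, hC, d, Φ, h₁, h₂, h₃, _⟩ := hF m₀
  ⟨C, hCc, hC, d, Φ, h₁, h₂, h₃⟩

namespace IsLinearTrivialization

variable {A : M → Type*} [∀ m, NormedAddCommGroup (A m)] [∀ m, NormedSpace ℂ (A m)]
  [TopologicalSpace (Σ m, A m)] {C : Set M} {G : Type*} [NormedAddCommGroup G]
  [NormedSpace ℂ G] [ProperSpace G] {Φ : {v : Σ m, A m // v.1 ∈ C} ≃ₜ C × G}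

theorem exists_pos_mul_norm_le (hΦ : IsLinearTrivialization Φ) (hC : IsCompact C)
    (hnorm : Continuous fun v : Σ m, A m => ‖v.2‖) :
    ∃ c > 0, ∀ (p : C) (x : A p), c * ‖hΦ.linearMap p x‖ ≤ ‖x‖ := by
  have := isCompact_iff_compactSpace.1 hC
  obtain ⟨c, hc, hcf⟩ := exists_pos_mul_norm_le_of_homogeneous (𝕜 := ℂ)
    (f := fun q => ‖(Φ.symm q).1.2‖) (hnorm.comp (continuous_subtype_val.comp Φ.symm.continuous))
    (fun p ξ a => by
      obtain ⟨x, rfl⟩ := hΦ.linearMap_surjective p ξ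
      rw [← (hΦ.linearMap p).map_smul, hΦ.symm_apply, hΦ.symm_apply]
      exact norm_smul a x)
    (fun p ξ hξ => by
      obtain ⟨x, rfl⟩ := hΦ.linearMap_surjective p ξ
      rw [hΦ.symm_apply, norm_pos_iff]
      intro hx
      exact hξ (by rw [show x = 0 from hx, _root_.map_zero]))
  refine ⟨c, hc, fun p x => ?_⟩
  have := hcf p (hΦ.linearMap p x)
  rwa [hΦ.symm_apply] at this

theorem isCompact_setOf_norm_le (hΦ : IsLinearTrivialization Φ) (hC : IsCompact C)
    (hnorm : Continuous fun v : Σ m, A m => ‖v.2‖) (R : ℝ) :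
    IsCompact {v : {v : Σ m, A m // v.1 ∈ C} | ‖v.1.2‖ ≤ R} := by
  obtain ⟨c, hc, hcx⟩ := hΦ.exists_pos_mul_norm_le hC hnorm
  refine (Φ.isCompact_preimage.2 ((isCompact_iff_isCompact_univ.1 hC).prod
    (isCompact_closedBall 0 (R / c)))).of_isClosed_subset
    (isClosed_le (hnorm.comp continuous_subtype_val) continuous_const) ?_
  rintro ⟨⟨m, x⟩, hm⟩ hx
  rw [mem_preimage, hΦ.apply_mk ⟨m, hm⟩ x]
  refine ⟨mem_univ _, ?_⟩
  rw [mem_closedBall_zero_iff, le_div_iff₀ hc, mul_comm]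
  exact (hcx ⟨m, hm⟩ x).trans (show ‖x‖ ≤ R from hx)

end IsLinearTrivialization

theorem isClosed_setOf_mem_of_isLocallyTrivialVectorBundle {F : M → Type*}
    [∀ m, NormedAddCommGroup (F m)] [∀ m, NormedSpace ℂ (F m)] [TopologicalSpace (Σ m, F m)]
    [T2Space (Σ m, F m)] (hπ : Continuous (Sigma.fst : (Σ m, F m) → M))
    (hnorm : Continuous fun v : Σ m, F m => ‖v.2‖) {W : ∀ m, Submodule ℂ (F m)}
    [TopologicalSpace (Σ m, W m)] (hι : IsInducing fun v : Σ m, W m => (⟨v.1, v.2⟩ : Σ m, F m))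
    (hW : IsLocallyTrivialVectorBundle fun m => W m) : IsClosed {v : Σ m, F m | v.2 ∈ W v.1} := by
  refine isClosed_of_forall_exists_inter_subset fun v _ => ?_
  obtain ⟨C, hCc, hC, d, Ψ, hΨ⟩ := isLocallyTrivialVectorBundle_iff.1 hW v.1
  have hN : Sigma.fst ⁻¹' C ∩ {u | ‖u.2‖ < ‖v.2‖ + 1} ∈ 𝓝 v :=
    inter_mem (hπ.continuousAt.preimage_mem_nhds hC)
      ((isOpen_lt hnorm continuous_const).mem_nhds (show ‖v.2‖ < ‖v.2‖ + 1 from lt_add_one _))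
  have hK := (hΨ.isCompact_setOf_norm_le hCc (hnorm.comp hι.continuous) (‖v.2‖ + 1)).image
    (hι.continuous.comp continuous_subtype_val)
  refine ⟨_, hN, _, hK.isClosed, ?_, ?_⟩
  · rintro _ ⟨w, -, rfl⟩
    exact w.1.2.2
  · rintro ⟨m, x⟩ ⟨hx, hm, hxR⟩
    exact ⟨⟨⟨m, ⟨x, hx⟩⟩, hm⟩, show ‖x‖ ≤ ‖v.2‖ + 1 from le_of_lt hxR, rfl⟩

namespace IsLinearTrivialization

variable {A : M → Type*} [∀ m, AddCommGroup (A m)] [∀ m, Module ℂ (A m)]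
  [TopologicalSpace (Σ m, A m)] {C : Set M} {G : Type*} [NormedAddCommGroup G] [NormedSpace ℂ G]
  [ProperSpace G] {Φ : {v : Σ m, A m // v.1 ∈ C} ≃ₜ C × G} {W : ∀ m, Submodule ℂ (A m)}
  [TopologicalSpace (Σ m, W m)]

theorem isCompact_setOf_norm_linearMap_le [T2Space M] (hΦ : IsLinearTrivialization Φ)
    (hC : IsClosed C) (hι : IsInducing fun v : Σ m, W m => (⟨v.1, v.2⟩ : Σ m, A m))
    (hgraph : IsClosed {q : C × G | q.2 ∈ hΦ.mapSubmodule W q.1}) {C' : Set M} (hC'C : C' ⊆ C)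
    (hC' : IsCompact C') (R : ℝ) :
    IsCompact {w : {v : Σ m, W m // v.1 ∈ C'} | ‖hΦ.linearMap ⟨w.1.1, hC'C w.2⟩ w.1.2‖ ≤ R} := by
  have he := Φ.isInducing.comp (hι.subtypeMap (p := (·.1 ∈ C')) fun _ h => hC'C h)
  have hK : IsCompact {q : C × G | (q.1 : M) ∈ C' ∧ q.2 ∈ hΦ.mapSubmodule W q.1 ∧ ‖q.2‖ ≤ R} :=
    ((hC.isClosedEmbedding_subtypeVal.isCompact_preimage hC').prod
      (isCompact_closedBall (0 : G) R)).of_isClosed_subset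
      ((hC'.isClosed.preimage (continuous_subtype_val.comp continuous_fst)).inter
        (hgraph.inter (isClosed_le continuous_snd.norm continuous_const)))
      fun q hq => ⟨hq.1, mem_closedBall_zero_iff.2 hq.2.2⟩
  refine (he.isCompact_preimage' hK ?_).of_isClosed_subset
    (isClosed_le (continuous_snd.comp he.continuous).norm continuous_const) ?_
  · rintro q ⟨hq, ⟨x, hx, hxq⟩, -⟩
    exact ⟨⟨⟨q.1, ⟨x, hx⟩⟩, hq⟩, (hΦ.apply_mk q.1 x).trans (Prod.ext rfl hxq)⟩
  · rintro ⟨⟨m, x⟩, hm⟩ hx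
    change Φ ⟨⟨m, x⟩, hC'C hm⟩ ∈ (_ : Set (C × G))
    rw [hΦ.apply_mk ⟨m, hC'C hm⟩ x]
    exact ⟨hm, Submodule.mem_map_of_mem x.2, hx⟩

theorem exists_isLinearTrivialization_subbundle [T2Space M] (hΦ : IsLinearTrivialization Φ)
    (hC : IsClosed C) (hι : IsInducing fun v : Σ m, W m => (⟨v.1, v.2⟩ : Σ m, A m))
    (hgraph : IsClosed {q : C × G | q.2 ∈ hΦ.mapSubmodule W q.1}) {C' : Set M} (hC'C : C' ⊆ C)
    (hC' : IsCompact C') {k : ℕ} (P : G →L[ℂ] EuclideanSpace ℂ (Fin k))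
    (hP : ∀ m (hm : m ∈ C'), (∀ ξ ∈ hΦ.mapSubmodule W ⟨m, hC'C hm⟩, ‖ξ‖ ≤ 2 * ‖P ξ‖) ∧
      (hΦ.mapSubmodule W ⟨m, hC'C hm⟩).map (P : G →ₗ[ℂ] EuclideanSpace ℂ (Fin k)) = ⊤) :
    ∃ Ψ : {v : Σ m, W m // v.1 ∈ C'} ≃ₜ C' × EuclideanSpace ℂ (Fin k),
      IsLinearTrivialization Ψ := by
  have he := Φ.isInducing.comp (hι.subtypeMap (p := (·.1 ∈ C')) fun _ h => hC'C h)
  let Ψ : {v : Σ m, W m // v.1 ∈ C'} → C' × EuclideanSpace ℂ (Fin k) :=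
    fun w => (⟨w.1.1, w.2⟩, P (hΦ.linearMap ⟨w.1.1, hC'C w.2⟩ w.1.2))
  have hΨc : Continuous Ψ := by
    have hfst : (fun w : {v : Σ m, W m // v.1 ∈ C'} => w.1.1) =
        fun w => ((Φ ⟨⟨w.1.1, w.1.2⟩, hC'C w.2⟩).1 : M) :=
      funext fun w => (hΦ.coe_fst ⟨⟨w.1.1, w.1.2⟩, hC'C w.2⟩).symm
    refine .prodMk (.subtype_mk ?_ _) (P.continuous.comp (continuous_snd.comp he.continuous))
    rw [hfst]
    exact continuous_subtype_val.comp (continuous_fst.comp he.continuous)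
  have hinj : Injective Ψ := by
    rintro ⟨⟨m, x⟩, hm⟩ ⟨⟨m', x'⟩, hm'⟩ h
    obtain ⟨h₁, h₂⟩ := Prod.mk.inj h
    obtain rfl : m = m' := congrArg Subtype.val h₁
    set L := hΦ.linearMap ⟨m, hC'C hm⟩
    change P (L x) = P (L x') at h₂
    have hbound := (hP m hm).1 _ (Submodule.mem_map_of_mem (sub_mem x.2 x'.2))
    rw [map_sub, map_sub, h₂, sub_self, norm_zero, mul_zero, norm_le_zero_iff, ← map_sub,
      ← L.map_zero] at hbound
    obtain rfl : x = x' := Subtype.ext (sub_eq_zero.1 (hΦ.linearMap_injective _ hbound))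
    rfl
  have hsurj : Surjective Ψ := by
    rintro ⟨⟨m, hm⟩, η⟩
    obtain ⟨ξ, ⟨x, hx, rfl⟩, hξ⟩ : η ∈ (hΦ.mapSubmodule W ⟨m, hC'C hm⟩).map (P : G →ₗ[ℂ] _) :=
      (hP m hm).2 ▸ Submodule.mem_top
    exact ⟨⟨⟨m, ⟨x, hx⟩⟩, hm⟩, Prod.ext rfl hξ⟩
  have hproper : IsProperMap Ψ := by
    have := isCompact_iff_compactSpace.1 hC'
    refine isProperMap_iff_isCompact_preimage.2 ⟨hΨc, fun K hK => ?_⟩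
    obtain ⟨R, hR⟩ := (hK.image continuous_snd).isBounded.subset_closedBall 0
    refine (hΦ.isCompact_setOf_norm_linearMap_le hC hι hgraph hC'C hC' (2 * R)).of_isClosed_subset
      (hK.isClosed.preimage hΨc) fun w hw => ?_
    have hPR : ‖(Ψ w).2‖ ≤ R := mem_closedBall_zero_iff.1 (hR ⟨_, hw, rfl⟩)
    exact ((hP _ w.2).1 _ (Submodule.mem_map_of_mem w.1.2.2)).trans (by gcongr)
  refine ⟨(Equiv.ofBijective Ψ ⟨hinj, hsurj⟩).toHomeomorphOfContinuousClosed hΨc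
    hproper.isClosedMap, ⟨fun _ => rfl, fun m hm x y => ?_, fun m hm c x => ?_⟩⟩
  · let L := hΦ.linearMap ⟨m, hC'C hm⟩
    change P (L (x + y : W m)) = P (L x) + P (L y)
    rw [Submodule.coe_add, _root_.map_add, _root_.map_add]
  · let L := hΦ.linearMap ⟨m, hC'C hm⟩
    change P (L (c • x : W m)) = c • P (L x)
    rw [Submodule.coe_smul, _root_.map_smul, _root_.map_smul]

end IsLinearTrivialization

theorem IsLocallyTrivialVectorBundle.subbundle_of_isClosed_of_isOpenMap [T2Space M]
    [LocallyCompactSpace M] {A : M → Type*} [∀ m, AddCommGroup (A m)] [∀ m, Module ℂ (A m)]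
    [TopologicalSpace (Σ m, A m)] (hA : IsLocallyTrivialVectorBundle A)
    {W : ∀ m, Submodule ℂ (A m)} [TopologicalSpace (Σ m, W m)]
    (hι : IsInducing fun v : Σ m, W m => (⟨v.1, v.2⟩ : Σ m, A m))
    (hcl : IsClosed {v : Σ m, A m | v.2 ∈ W v.1}) (hop : IsOpenMap (Sigma.fst : (Σ m, W m) → M)) :
    IsLocallyTrivialVectorBundle fun m => W m := by
  refine isLocallyTrivialVectorBundle_iff.2 fun m₀ => ?_
  obtain ⟨C, hCc, hC, d, Φ, hΦ⟩ := isLocallyTrivialVectorBundle_iff.1 hA m₀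
  set V := hΦ.mapSubmodule W
  have hgraph := hΦ.isClosed_setOf_mem_mapSubmodule hcl
  let p₀ : C := ⟨m₀, mem_of_mem_nhds hC⟩
  let β := (stdOrthonormalBasis ℂ (V p₀)).repr
  let P := β.toContinuousLinearEquiv.toContinuousLinearMap ∘L (V p₀).orthogonalProjectionOnto
  have hgood : ∀ᶠ p in 𝓝 p₀, (∀ ξ ∈ V p, ‖ξ‖ ≤ 2 * ‖P ξ‖) ∧
      (V p).map (P : EuclideanSpace ℂ (Fin d) →ₗ[ℂ] EuclideanSpace ℂ (Fin (finrank ℂ (V p₀)))) =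
        ⊤ := by
    filter_upwards [eventually_norm_le_two_mul_norm_orthogonalProjectionOnto hgraph,
      eventually_map_orthogonalProjectionOnto_eq_top fun ξ hξ t ht =>
        hΦ.eventually_nonempty_mapSubmodule_inter hι hop hξ ht] with p hbound htop
    refine ⟨fun ξ hξ => by simpa [P] using hbound ξ hξ, ?_⟩
    change (V p).map (β.toLinearEquiv.toLinearMap ∘ₗ
      ((V p₀).orthogonalProjectionOnto : EuclideanSpace ℂ (Fin d) →ₗ[ℂ] V p₀)) = ⊤
    rw [Submodule.map_comp, htop, Submodule.map_top, LinearMap.range_eq_top]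
    exact β.surjective
  rw [nhds_subtype_eq_comap, eventually_comap] at hgood
  obtain ⟨C', hC', hC'sub, hC'c⟩ := local_compact_nhds (inter_mem hgood hC)
  obtain ⟨Ψ, hΨ⟩ := hΦ.exists_isLinearTrivialization_subbundle hCc.isClosed hι hgraph
    (fun m hm => (hC'sub hm).2) hC'c P fun m hm => (hC'sub hm).1 ⟨m, _⟩ rfl
  exact ⟨C', hC'c, hC', _, Ψ, hΨ⟩

/-- Let `s : E → M` be a locally trivial continuous Banach bundle over a locally
compact Hausdorff space `M` and `F ⊆ E` a subset meeting every fiber in a linear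
subspace (given here as a family of submodules `W m ≤ E_m`). Then the restriction
`s|_F : F → M` (with the subspace topology on `F = Σ m, W m`) is a locally trivial
vector bundle if and only if `F` is closed in `E` and `s|_F` is an open map. -/
theorem subbundle_locallyTrivial_iff_closed_and_open
    [LocallyCompactSpace M] [T2Space M]
    {F : M → Type v} [∀ m, NormedAddCommGroup (F m)] [∀ m, NormedSpace ℂ (F m)]
    [∀ m, CompleteSpace (F m)] [TopologicalSpace (Σ m, F m)]
    (hB : IsContinuousBanachBundle F) (hLT : IsLocallyTrivialBanachBundle F)
    (W : ∀ m, Submodule ℂ (F m)) :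
    @IsLocallyTrivialVectorBundle M _ (fun m => ↥(W m)) _ _
        (TopologicalSpace.induced
          (fun v : Σ m, ↥(W m) => (⟨v.1, (v.2 : F v.1)⟩ : Σ m, F m))
          inferInstance) ↔
      IsClosed {v : Σ m, F m | v.2 ∈ W v.1} ∧
        @IsOpenMap (Σ m, ↥(W m)) M
          (TopologicalSpace.induced
            (fun v : Σ m, ↥(W m) => (⟨v.1, (v.2 : F v.1)⟩ : Σ m, F m))
            inferInstance) _
          Sigma.fst := by
  let : TopologicalSpace (Σ m, W m) :=
    .induced (fun v : Σ m, W m => (⟨v.1, v.2⟩ : Σ m, F m)) inferInstance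
  have hι : IsInducing fun v : Σ m, W m => (⟨v.1, v.2⟩ : Σ m, F m) := ⟨rfl⟩
  have hF := hLT.isLocallyTrivialVectorBundle
  have := hF.t2Space hB.continuous_proj
  exact ⟨fun hW => ⟨isClosed_setOf_mem_of_isLocallyTrivialVectorBundle hB.continuous_proj
    hB.continuous_norm hι hW, hW.isOpenMap_fst⟩,
    fun ⟨hcl, hop⟩ => hF.subbundle_of_isClosed_of_isOpenMap hι hcl hop⟩
end

section
/- Let p : H → M be a compact group bundle over a compact Hausdorff space M. Then p is an open map if and only if the map M → P_p(H), m ↦ λ_{H_m}, assigning to each m the Haar probability measure of the fiber group H_m viewed as a fiber measure on H, is continuous (equivalently, is a relative measure for p). -/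
/-!
The fiber measure `λ_m` is the image of a left Haar probability measure on the compact group
`H_m`; by uniqueness of such measures it is also right invariant, and it charges every open set
meeting `H_m`.

If `m ↦ λ_m` is continuous and `x ∈ U` with `U` open, take a Urysohn function `g` supported in
`U` with `g x = 1`: then `m ↦ ∫ g dλ_m` is continuous, positive at `p x`, and positive only
where `H_m` meets `U`, so `p(U)` is a neighbourhood of `p x`.

Conversely, fix `f` and `m₀`. The `C(H_{m₀}, ℝ)`-valued integral of `v ↦ f(· v)` lies in the
closed convex hull of its values, so `∫ f dλ_{m₀}` is approximated by `∑ cᵢ f(x yᵢ)` uniformly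
in `x ∈ H_{m₀}`. Since `p` is open, the `yᵢ` can be moved to points `vᵢ` of any nearby fiber
`H_m`, and a tube-lemma argument keeps `∑ cᵢ f(x vᵢ)` close to `∫ f dλ_{m₀}` for all `x ∈ H_m`.
By right invariance, `∫ f dλ_m` is the `λ_m`-average of `x ↦ ∑ cᵢ f(x vᵢ)`.
-/

open scoped Classical

open MeasureTheory

/-- A compact group bundle: a continuous surjection `proj : H → M` between compact
Hausdorff spaces such that each fiber `H_m = proj⁻¹({m})` is a group, with continuous
multiplication (on the fiber product, encoded as a total map `mul` whose axioms are only
imposed on pairs in the same fiber), continuous inversion and a continuous unit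
section. -/
structure CompactGroupBundle (H M : Type*) [TopologicalSpace H] [TopologicalSpace M]
    where
  proj : H → M
  continuous_proj : Continuous proj
  surjective_proj : Function.Surjective proj
  mul : H → H → H
  proj_mul : ∀ x y, proj x = proj y → proj (mul x y) = proj x
  continuousOn_mul :
    ContinuousOn (fun xy : H × H => mul xy.1 xy.2) {xy | proj xy.1 = proj xy.2}
  inv : H → H
  continuous_inv : Continuous inv
  proj_inv : ∀ x, proj (inv x) = proj x
  one : M → H
  continuous_one : Continuous one
  proj_one : ∀ m, proj (one m) = m
  mul_assoc' : ∀ x y z, proj x = proj y → proj y = proj z →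
    mul (mul x y) z = mul x (mul y z)
  one_mul' : ∀ x, mul (one (proj x)) x = x
  mul_one' : ∀ x, mul x (one (proj x)) = x
  inv_mul_cancel' : ∀ x, mul (inv x) x = one (proj x)

open Set Filter Topology

theorem IsClosedMap.eventually_preimage_singleton_subset {X Y : Type*} [TopologicalSpace X]
    [TopologicalSpace Y] {p : X → Y} (hp : IsClosedMap p) {U : Set X} (hU : IsOpen U) {y₀ : Y}
    (h : p ⁻¹' {y₀} ⊆ U) : ∀ᶠ y in 𝓝 y₀, p ⁻¹' {y} ⊆ U := by
  refine mem_of_superset ((hp _ hU.isClosed_compl).isOpen_compl.mem_nhds ?_) ?_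
  · rintro ⟨x, hxU, rfl⟩
    exact hxU (h rfl)
  · intro y hy x hx
    by_contra hxU
    exact hy ⟨x, hxU, hx⟩

theorem IsOpenMap.eventually_exists_pi_mem {X Y ι : Type*} [TopologicalSpace X]
    [TopologicalSpace Y] [Finite ι] {p : X → Y} (hp : IsOpenMap p) {x : ι → X} {y₀ : Y}
    (hx : ∀ i, p (x i) = y₀) {V : Set (ι → X)} (hV : IsOpen V) (hxV : x ∈ V) :
    ∀ᶠ y in 𝓝 y₀, ∃ v ∈ V, ∀ i, p (v i) = y := by
  obtain ⟨u, hu, huV⟩ := isOpen_pi_iff'.mp hV x hxV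
  have : ∀ᶠ y in 𝓝 y₀, ∀ i, y ∈ p '' u i :=
    eventually_all.mpr fun i => hx i ▸ hp.image_mem_nhds ((hu i).1.mem_nhds (hu i).2)
  refine this.mono fun y hy => ?_
  choose v hvu hv using hy
  exact ⟨v, huV fun i _ => hvu i, hv⟩

theorem ContinuousOn.isOpen_setOf_mem_imp {X Y : Type*} [TopologicalSpace X]
    [TopologicalSpace Y] {g : X → Y} {E : Set X} {V : Set Y} (hg : ContinuousOn g E)
    (hE : IsClosed E) (hV : IsOpen V) : IsOpen {q | q ∈ E → g q ∈ V} := by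
  convert (hg.preimage_isClosed_of_isClosed hE hV.isClosed_compl).isOpen_compl using 1
  ext q
  simp

theorem exists_convex_sum_uniformly_near_integral {X Y : Type*} [TopologicalSpace X]
    [CompactSpace X] [MeasurableSpace X] [OpensMeasurableSpace X] [TopologicalSpace Y]
    [CompactSpace Y] (μ : Measure X) [IsProbabilityMeasure μ] {F : Y → X → ℝ}
    (hF : Continuous (Function.uncurry F)) {ε : ℝ} (hε : 0 < ε) :
    ∃ (ι : Type) (_ : Fintype ι) (c : ι → ℝ) (x : ι → X), (∀ i, 0 ≤ c i) ∧ ∑ i, c i = 1 ∧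
      ∀ y, |∫ v, F y v ∂μ - ∑ i, c i * F y (x i)| < ε := by
  let Φ : C(X, C(Y, ℝ)) := ContinuousMap.curry ⟨fun p => F p.2 p.1, hF.comp continuous_swap⟩
  have hΦ : Integrable Φ μ :=
    Φ.continuous.integrable_of_hasCompactSupport (.of_compactSpace _)
  have hmem : ∫ v, Φ v ∂μ ∈ closure (convexHull ℝ (range Φ)) :=
    (convex_convexHull ℝ _).closure.integral_mem isClosed_closure
      (ae_of_all _ fun v => subset_closure (subset_convexHull ℝ _ (mem_range_self v))) hΦ
  obtain ⟨φ, hφ, hdist⟩ := Metric.mem_closure_iff.mp hmem ε hε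
  obtain ⟨ι, _, c, φs, hc0, hc1, hφs, rfl⟩ := mem_convexHull_iff_exists_fintype.mp hφ
  choose x hx using hφs
  refine ⟨ι, inferInstance, c, x, hc0, hc1, fun y => ?_⟩
  have := (ContinuousMap.dist_apply_le_dist y).trans_lt hdist
  rw [ContinuousMap.integral_apply hΦ, ← funext hx, Real.dist_eq] at this
  simp only [ContinuousMap.coe_sum, Finset.sum_apply, ContinuousMap.coe_smul, Pi.smul_apply,
    smul_eq_mul] at this
  exact this

theorem abs_integral_sub_le_of_forall {X : Type*} [MeasurableSpace X] {μ : Measure X}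
    [IsProbabilityMeasure μ] {g : X → ℝ} (hg : Integrable g μ) {a δ : ℝ}
    (h : ∀ x, |g x - a| ≤ δ) : |∫ x, g x ∂μ - a| ≤ δ := by
  have hsub : ∫ x, (g x - a) ∂μ = ∫ x, g x ∂μ - a := by
    rw [integral_sub hg (integrable_const a), integral_const, probReal_univ, one_smul]
  calc |∫ x, g x ∂μ - a| = ‖∫ x, (g x - a) ∂μ‖ := by rw [hsub, Real.norm_eq_abs]
    _ ≤ δ * μ.real univ := norm_integral_le_of_norm_le_const (ae_of_all _ h)
    _ = δ := by rw [probReal_univ, mul_one]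

section CompactGroup

open Measure

variable {G : Type*} [Group G] [TopologicalSpace G] [IsTopologicalGroup G] [CompactSpace G]
  [MeasurableSpace G] [BorelSpace G]

theorem isMulRightInvariant_of_isProbabilityMeasure (μ : Measure G) [IsHaarMeasure μ]
    [IsProbabilityMeasure μ] : IsMulRightInvariant μ :=
  ⟨fun g =>
    have : IsProbabilityMeasure (μ.map (· * g)) := isProbabilityMeasure_map (by fun_prop)
    isHaarMeasure_eq_of_isProbabilityMeasure _ _⟩

end CompactGroup

namespace CompactGroupBundle

open Measure

variable {H M : Type*} [TopologicalSpace H] [TopologicalSpace M]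

abbrev Fiber (B : CompactGroupBundle H M) (m : M) : Type _ := {x : H // B.proj x = m}

section FiberGroup

variable {B : CompactGroupBundle H M} {m : M}

instance : Mul (B.Fiber m) :=
  ⟨fun a b => ⟨B.mul a b, (B.proj_mul a b (a.2.trans b.2.symm)).trans a.2⟩⟩

instance : One (B.Fiber m) := ⟨⟨B.one m, B.proj_one m⟩⟩

instance : Inv (B.Fiber m) := ⟨fun a => ⟨B.inv a, (B.proj_inv a).trans a.2⟩⟩

@[simp]
theorem Fiber.coe_mul (a b : B.Fiber m) : ((a * b : B.Fiber m) : H) = B.mul a b := rfl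

instance : Group (B.Fiber m) :=
  Group.ofLeftAxioms
    (fun a b c => Subtype.ext (B.mul_assoc' a b c (a.2.trans b.2.symm) (b.2.trans c.2.symm)))
    (fun ⟨x, hx⟩ => Subtype.ext (hx ▸ B.one_mul' x))
    (fun a => Subtype.ext ((B.inv_mul_cancel' a).trans (congrArg B.one a.2)))

instance : IsTopologicalGroup (B.Fiber m) where
  continuous_mul :=
    (B.continuousOn_mul.comp_continuous
      (f := fun q : B.Fiber m × B.Fiber m => ((q.1 : H), (q.2 : H))) (by fun_prop)
      fun q => q.1.2.trans q.2.2.symm).subtype_mk _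
  continuous_inv := (B.continuous_inv.comp continuous_subtype_val).subtype_mk _

instance [CompactSpace H] [T1Space M] : CompactSpace (B.Fiber m) :=
  isCompact_iff_compactSpace.mp (isClosed_singleton.preimage B.continuous_proj).isCompact

end FiberGroup

theorem continuousOn_mul_left (B : CompactGroupBundle H M) (x : H) :
    ContinuousOn (B.mul x) {y | B.proj y = B.proj x} :=
  B.continuousOn_mul.comp (continuous_const.prodMk continuous_id).continuousOn fun _ hy => hy.symm

variable [MeasurableSpace H] [BorelSpace H]

theorem measurable_leftMul [T1Space M] (B : CompactGroupBundle H M) (x : H) :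
    Measurable fun y => if B.proj y = B.proj x then B.mul x y else y :=
  (B.continuousOn_mul_left x).measurable_piecewise continuous_id.continuousOn
    (isClosed_singleton.preimage B.continuous_proj).measurableSet

theorem measurableEmbedding_fiber_val [T1Space M] {B : CompactGroupBundle H M} {m : M} :
    MeasurableEmbedding (Subtype.val : B.Fiber m → H) :=
  .subtype_coe (isClosed_singleton.preimage B.continuous_proj).measurableSet

variable (B : CompactGroupBundle H M)

noncomputable def fiberMeasure (m : M) (μ : Measure H) : Measure (B.Fiber m) :=
  μ.comap Subtype.val

variable [MeasurableSpace M] [BorelSpace M]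

structure IsFiberHaar (m : M) (μ : Measure H) : Prop where
  map_proj : μ.map B.proj = dirac m
  map_leftMul : ∀ x, B.proj x = m →
    μ.map (fun y => if B.proj y = B.proj x then B.mul x y else y) = μ

variable {B} {m : M} {μ : Measure H}

namespace IsFiberHaar

theorem ae_proj_eq [T1Space M] (hμ : B.IsFiberHaar m μ) : ∀ᵐ y ∂μ, B.proj y = m := by
  refine ae_of_ae_map B.continuous_proj.aemeasurable (p := (· = m)) ?_
  rw [hμ.map_proj, ae_dirac_eq]
  exact rfl

theorem isProbabilityMeasure (hμ : B.IsFiberHaar m μ) : IsProbabilityMeasure μ := by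
  have := congrArg (· univ) hμ.map_proj
  simp only [map_apply B.continuous_proj.measurable MeasurableSet.univ, preimage_univ,
    measure_univ] at this
  exact ⟨this⟩

theorem map_fiberMeasure [T1Space M] (hμ : B.IsFiberHaar m μ) :
    (B.fiberMeasure m μ).map Subtype.val = μ := by
  rw [fiberMeasure, measurableEmbedding_fiber_val.map_comap, Subtype.range_coe_subtype]
  exact restrict_eq_self_of_ae_mem hμ.ae_proj_eq

theorem integral_fiberMeasure [T1Space M] (hμ : B.IsFiberHaar m μ) (f : H → ℝ) :
    ∫ x, f x ∂B.fiberMeasure m μ = ∫ y, f y ∂μ := by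
  conv_rhs => rw [← hμ.map_fiberMeasure]
  exact (measurableEmbedding_fiber_val.integral_map f).symm

theorem isProbabilityMeasure_fiberMeasure [T1Space M] (hμ : B.IsFiberHaar m μ) :
    IsProbabilityMeasure (B.fiberMeasure m μ) := by
  have := hμ.isProbabilityMeasure
  refine ⟨?_⟩
  rw [← preimage_univ (f := Subtype.val), ← map_apply measurable_subtype_coe .univ,
    hμ.map_fiberMeasure, measure_univ]

theorem isMulLeftInvariant_fiberMeasure [T1Space M] (hμ : B.IsFiberHaar m μ) :
    IsMulLeftInvariant (B.fiberMeasure m μ) := by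
  refine ⟨fun g => ?_⟩
  have hval : (Subtype.val ∘ (g * ·) : B.Fiber m → H) =
      (fun y => if B.proj y = B.proj g then B.mul g y else y) ∘ Subtype.val := by
    funext y
    simp [y.2.trans g.2.symm]
  calc (B.fiberMeasure m μ).map (g * ·)
      = (((B.fiberMeasure m μ).map (g * ·)).map Subtype.val).comap Subtype.val :=
        (measurableEmbedding_fiber_val.comap_map _).symm
    _ = (μ.map fun y => if B.proj y = B.proj g then B.mul g y else y).comap Subtype.val := by
        rw [map_map measurable_subtype_coe (measurable_const_mul g), hval,
          ← map_map (B.measurable_leftMul g) measurable_subtype_coe, hμ.map_fiberMeasure]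
    _ = B.fiberMeasure m μ := by rw [hμ.map_leftMul g g.2]; rfl

theorem isHaarMeasure_fiberMeasure [CompactSpace H] [T1Space M] (hμ : B.IsFiberHaar m μ) :
    IsHaarMeasure (B.fiberMeasure m μ) := by
  have := hμ.isMulLeftInvariant_fiberMeasure
  have := hμ.isProbabilityMeasure_fiberMeasure
  exact isHaarMeasure_of_isCompact_nonempty_interior _ univ isCompact_univ
    (by simp) (by simp) (by simp)

theorem integral_pos [CompactSpace H] [T1Space M] (hμ : B.IsFiberHaar m μ) {f : H → ℝ}
    (hf : Continuous f) (hf0 : 0 ≤ f) {x : H} (hx : B.proj x = m) (hfx : f x ≠ 0) :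
    0 < ∫ y, f y ∂μ := by
  have := hμ.isHaarMeasure_fiberMeasure
  rw [← hμ.integral_fiberMeasure]
  exact (hf.comp continuous_subtype_val).integral_pos_of_hasCompactSupport_nonneg_nonzero
    (x := ⟨x, hx⟩) (.of_compactSpace _) (fun y => hf0 y) hfx

theorem exists_convex_sum_near_integral [CompactSpace H] [T1Space M] (hμ : B.IsFiberHaar m μ)
    {f : H → ℝ} (hf : Continuous f) {ε : ℝ} (hε : 0 < ε) :
    ∃ (ι : Type) (_ : Fintype ι) (c : ι → ℝ) (v : ι → B.Fiber m), (∀ i, 0 ≤ c i) ∧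
      ∑ i, c i = 1 ∧ ∀ x : B.Fiber m, |∫ y, f y ∂μ - ∑ i, c i * f (B.mul x (v i))| < ε := by
  have := hμ.isMulLeftInvariant_fiberMeasure
  have := hμ.isProbabilityMeasure_fiberMeasure
  have hF : Continuous (Function.uncurry fun x v : B.Fiber m => f (x * v : B.Fiber m)) :=
    hf.comp (continuous_subtype_val.comp continuous_mul)
  obtain ⟨ι, _, c, v, hc0, hc1, hv⟩ :=
    exists_convex_sum_uniformly_near_integral (B.fiberMeasure m μ) hF hε
  refine ⟨ι, inferInstance, c, v, hc0, hc1, fun x => ?_⟩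
  have := hv x
  rwa [integral_mul_left_eq_self (fun v : B.Fiber m => f v), hμ.integral_fiberMeasure] at this

theorem abs_integral_sub_le [CompactSpace H] [T1Space M] (hμ : B.IsFiberHaar m μ)
    {f : H → ℝ} (hf : Continuous f) {ι : Type*} [Fintype ι] {c : ι → ℝ} (hc : ∑ i, c i = 1)
    (v : ι → B.Fiber m) {a δ : ℝ}
    (h : ∀ x : B.Fiber m, |∑ i, c i * f (B.mul x (v i)) - a| ≤ δ) :
    |∫ y, f y ∂μ - a| ≤ δ := by
  have := hμ.isHaarMeasure_fiberMeasure
  have := hμ.isProbabilityMeasure_fiberMeasure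
  have := isMulRightInvariant_of_isProbabilityMeasure (B.fiberMeasure m μ)
  have hint : ∀ i, Integrable (fun x : B.Fiber m => f (B.mul x (v i))) (B.fiberMeasure m μ) :=
    fun i => (hf.comp (continuous_subtype_val.comp (continuous_mul_const _)))
      |>.integrable_of_hasCompactSupport (.of_compactSpace _)
  have hmul : ∀ i, ∫ x, f (B.mul x (v i)) ∂B.fiberMeasure m μ = ∫ y, f y ∂μ := fun i =>
    (integral_mul_right_eq_self (fun x : B.Fiber m => f x) (v i)).trans
      (hμ.integral_fiberMeasure f)
  have hsum : ∫ x, ∑ i, c i * f (B.mul x (v i)) ∂B.fiberMeasure m μ = ∫ y, f y ∂μ := by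
    rw [integral_finsetSum _ fun i _ => (hint i).const_mul _]
    simp only [integral_const_mul, hmul, ← Finset.sum_mul, hc, one_mul]
  rw [← hsum]
  exact abs_integral_sub_le_of_forall (integrable_finsetSum _ fun i _ => (hint i).const_mul _) h

end IsFiberHaar

theorem eventually_abs_integral_sub_lt [CompactSpace H] [T2Space M] {μ : M → Measure H}
    (hμ : ∀ m, B.IsFiberHaar m (μ m)) (hp : IsOpenMap B.proj) {f : H → ℝ} (hf : Continuous f)
    (m₀ : M) {ε : ℝ} (hε : 0 < ε) :
    ∀ᶠ m in 𝓝 m₀, |∫ y, f y ∂μ m - ∫ y, f y ∂μ m₀| < ε := by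
  obtain ⟨ι, _, c, y, -, hc, hy⟩ := (hμ m₀).exists_convex_sum_near_integral hf (half_pos hε)
  set I := ∫ y, f y ∂μ m₀
  let E : Set (H × (ι → H)) := {q | ∀ i, B.proj (q.2 i) = B.proj q.1}
  have hE : IsClosed E := by
    simp only [E, ofPred_forall]
    exact isClosed_iInter fun i => isClosed_eq
      (B.continuous_proj.comp ((continuous_apply i).comp continuous_snd))
      (B.continuous_proj.comp continuous_fst)
  let G : H × (ι → H) → ℝ := fun q => ∑ i, c i * f (B.mul q.1 (q.2 i))
  have hG : ContinuousOn G E := continuousOn_finsetSum _ fun i _ =>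
    continuousOn_const.mul <| hf.comp_continuousOn <| B.continuousOn_mul.comp
      (by fun_prop : Continuous fun q : H × (ι → H) => (q.1, q.2 i)).continuousOn
      fun q hq => (hq i).symm
  have hS := hG.isOpen_setOf_mem_imp hE (Metric.isOpen_ball (x := I) (ε := ε / 2))
  have hKS : (B.proj ⁻¹' {m₀}) ×ˢ {fun i => (y i : H)} ⊆
      {q | q ∈ E → G q ∈ Metric.ball I (ε / 2)} := by
    rintro ⟨x, _⟩ ⟨hx, rfl⟩ -
    rw [Metric.mem_ball, Real.dist_eq, abs_sub_comm]
    exact hy ⟨x, hx⟩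
  obtain ⟨U, V, hU, hV, hfibU, hyV, hUV⟩ := generalized_tube_lemma
    (isClosed_singleton.preimage B.continuous_proj).isCompact isCompact_singleton hS hKS
  filter_upwards [B.continuous_proj.isClosedMap.eventually_preimage_singleton_subset hU hfibU,
    hp.eventually_exists_pi_mem (fun i => (y i).2) hV (hyV rfl)] with m hmU ⟨v, hvV, hv⟩
  refine ((hμ m).abs_integral_sub_le hf hc (fun i => ⟨v i, hv i⟩) fun x => ?_).trans_lt
    (half_lt_self hε)
  have hxv : ((x : H), v) ∈ U ×ˢ V := ⟨hmU x.2, hvV⟩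
  exact (Metric.mem_ball.mp (hUV hxv fun i => (hv i).trans x.2.symm)).le

theorem continuous_of_isOpenMap_proj [CompactSpace H] [T2Space M]
    {μ : M → ProbabilityMeasure H} (hμ : ∀ m, B.IsFiberHaar m (μ m)) (hp : IsOpenMap B.proj) :
    Continuous μ :=
  continuous_iff_continuousAt.mpr fun m₀ =>
    ProbabilityMeasure.tendsto_iff_forall_integral_tendsto.mpr fun f =>
      Metric.tendsto_nhds.mpr fun _ hε =>
        (eventually_abs_integral_sub_lt hμ hp f.continuous m₀ hε).mono fun _ hm => by
          rwa [Real.dist_eq]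

theorem isOpenMap_proj_of_continuous [CompactSpace H] [T2Space H] [T1Space M]
    {μ : M → ProbabilityMeasure H} (hμ : ∀ m, B.IsFiberHaar m (μ m)) (hcont : Continuous μ) :
    IsOpenMap B.proj := by
  refine fun U hU => isOpen_iff_mem_nhds.mpr ?_
  rintro _ ⟨x, hxU, rfl⟩
  obtain ⟨g, hg0, hg1, hg01⟩ := exists_continuous_zero_one_of_isClosed hU.isClosed_compl
    isClosed_singleton (disjoint_singleton_right.mpr fun h => h hxU)
  have hφ : Continuous fun m => ∫ y, g y ∂(μ m : Measure H) :=
    (ProbabilityMeasure.continuous_integral_boundedContinuousFunction (.mkOfCompact g)).comp hcont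
  have hpos : 0 < ∫ y, g y ∂(μ (B.proj x) : Measure H) :=
    (hμ _).integral_pos g.continuous (fun y => (hg01 y).1) rfl (by simp [hg1 rfl])
  refine mem_of_superset ((hφ.isOpen_preimage _ isOpen_Ioi).mem_nhds hpos) fun m hm => ?_
  by_contra hmU
  have hzero : ∫ y, g y ∂(μ m : Measure H) = 0 := integral_eq_zero_of_ae <|
    (hμ m).ae_proj_eq.mono fun y hy => hg0 fun hyU => hmU ⟨y, hyU, hy⟩
  exact (mem_Ioi.mp hm).ne' hzero

end CompactGroupBundle

theorem isOpenMap_iff_haarFamily_continuous_general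
    {H M : Type*} [TopologicalSpace H] [CompactSpace H] [T2Space H]
    [MeasurableSpace H] [BorelSpace H]
    [TopologicalSpace M] [T2Space M]
    [MeasurableSpace M] [BorelSpace M]
    (B : CompactGroupBundle H M)
    (lam : M → ProbabilityMeasure H)
    (hlam_fiber : ∀ m : M, ((lam m : Measure H)).map B.proj = Measure.dirac m)
    (hlam_inv : ∀ x : H,
      ((lam (B.proj x) : Measure H)).map
          (fun y => if B.proj y = B.proj x then B.mul x y else y) =
        (lam (B.proj x) : Measure H)) :
    IsOpenMap B.proj ↔ Continuous lam := by
  have hlam : ∀ m, B.IsFiberHaar m (lam m) := fun m =>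
    ⟨hlam_fiber m, fun x hx => hx ▸ hlam_inv x⟩
  exact ⟨B.continuous_of_isOpenMap_proj hlam, B.isOpenMap_proj_of_continuous hlam⟩

/-- Let `p : H → M` be a compact group bundle over a compact Hausdorff space and let
`m ↦ λ_{H_m}` be the family of (normalized) Haar measures of the compact fiber groups,
viewed as fiber measures on `H` (characterized as the regular probability measures
supported on the fibers which are invariant under all left fiber translations). Then
`p` is an open map if and only if this family is continuous (equivalently, a relative
measure for `p`). -/
theorem isOpenMap_iff_haarFamily_continuous
    {H M : Type*} [TopologicalSpace H] [CompactSpace H] [T2Space H]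
    [MeasurableSpace H] [BorelSpace H]
    [TopologicalSpace M] [CompactSpace M] [T2Space M]
    [MeasurableSpace M] [BorelSpace M]
    (B : CompactGroupBundle H M)
    (lam : M → ProbabilityMeasure H)
    (hlam_fiber : ∀ m : M, ((lam m : Measure H)).map B.proj = Measure.dirac m)
    (hlam_reg : ∀ m : M, (lam m : Measure H).Regular)
    (hlam_inv : ∀ x : H,
      ((lam (B.proj x) : Measure H)).map
          (fun y => if B.proj y = B.proj x then B.mul x y else y) =
        (lam (B.proj x) : Measure H)) :
    IsOpenMap B.proj ↔ Continuous lam :=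
  isOpenMap_iff_haarFamily_continuous_general B lam hlam_fiber hlam_inv
end

section
/- Let H be a compact group and f a normalized positive definite function on H associated with an irreducible unitary representation π (i.e., f(x) = (π(x)v|v) for a unit vector v). If (f_α) is a net of normalized positive definite functions on H such that ∫_H f_α g dλ_H → ∫_H f g dλ_H for every g ∈ C(H), then f_α → f uniformly on H. -/
/-!
Fix `s > 0` and a continuous probability density `u` supported where `2 - 2 Re f < s²`.
For a normalized positive definite `ψ = ⟪π(·)v, v⟫` we have
`‖ψ x - ψ (x * y)‖ ≤ ‖v - π y v‖ = √(2 - 2 Re ψ y)`, so by AM-GM `ψ` is within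
`s + D ψ / s` of its smoothing `x ↦ ∫ ψ (x * y) u y`, where `D ψ = ∫ (2 - 2 Re ψ) u`.
By invariance of Haar measure the smoothing of `ψ` at `x` is the pairing of `ψ` with a left
translate of `u`; these translates depend continuously on `x`, so the smoothings of the `F α`
are equicontinuous and weak convergence makes them converge uniformly to the smoothing of `f`.
Weak convergence also gives `D (F α) → D f ≤ s²`, so eventually both `f` and `F α` are within
`O(s)` of their smoothings.
-/

open MeasureTheory Filter Topology
open scoped InnerProductSpace

variable {H : Type*} [Group H] [TopologicalSpace H] [IsTopologicalGroup H]
  [CompactSpace H] [T2Space H]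

/-- A normalized positive definite function on a compact group `H`: a function of the
form `x ↦ ⟪π(x)v, v⟫` for a (strongly continuous) unitary representation `π` of `H` on a
nonzero Hilbert space and a unit vector `v`. If `irred` is `true`, the representation is
moreover required to be irreducible. -/
def IsNormalizedPosDefFn (irred : Bool) (f : H → ℂ) : Prop :=
  ∃ (E : Type) (_ : NormedAddCommGroup E) (_ : InnerProductSpace ℂ E)
    (_ : CompleteSpace E) (π : H → (E →L[ℂ] E)) (v : E),
      (∀ x y : H, π (x * y) = (π x).comp (π y)) ∧
      π 1 = ContinuousLinearMap.id ℂ E ∧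
      (∀ (x : H) (w w' : E), ⟪π x w, π x w'⟫_ℂ = ⟪w, w'⟫_ℂ) ∧
      (∀ w : E, Continuous fun x => π x w) ∧
      ‖v‖ = 1 ∧
      (irred = true →
        Nontrivial E ∧ ∀ W : Submodule ℂ E, IsClosed (W : Set E) →
          (∀ (x : H), ∀ w ∈ W, π x w ∈ W) → W = ⊥ ∨ W = ⊤) ∧
      f = fun x => ⟪π x v, v⟫_ℂ

section NormalizedPosDef

variable {G : Type*} [Group G] [TopologicalSpace G] {b : Bool} {φ : G → ℂ}

theorem IsNormalizedPosDefFn.map_one (hφ : IsNormalizedPosDefFn b φ) : φ 1 = 1 := by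
  obtain ⟨E, _, _, _, π, v, -, hone, -, -, hv, -, rfl⟩ := hφ
  simp [hone, inner_self_eq_norm_sq_to_K, hv]

theorem IsNormalizedPosDefFn.continuous (hφ : IsNormalizedPosDefFn b φ) : Continuous φ := by
  obtain ⟨E, _, _, _, π, v, -, -, -, hcont, -, -, rfl⟩ := hφ
  exact (hcont v).inner continuous_const

theorem IsNormalizedPosDefFn.norm_le_one (hφ : IsNormalizedPosDefFn b φ) (x : G) :
    ‖φ x‖ ≤ 1 := by
  obtain ⟨E, _, _, _, π, v, -, -, hinner, -, hv, -, rfl⟩ := hφ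
  calc ‖⟪π x v, v⟫_ℂ‖ ≤ ‖π x v‖ * ‖v‖ := norm_inner_le_norm _ _
    _ = 1 := by
      rw [show ‖π x v‖ = ‖v‖ from ((π x : E →ₗ[ℂ] E).isometryOfInner (hinner x)).norm_map v,
        hv, one_mul]

theorem IsNormalizedPosDefFn.norm_sub_mul_le (hφ : IsNormalizedPosDefFn b φ) (x y : G) :
    ‖φ x - φ (x * y)‖ ≤ √(2 - 2 * (φ y).re) := by
  obtain ⟨E, _, _, _, π, v, hmul, -, hinner, -, hv, -, rfl⟩ := hφ
  have hnorm (x : G) (w : E) : ‖π x w‖ = ‖w‖ :=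
    ((π x : E →ₗ[ℂ] E).isometryOfInner (hinner x)).norm_map w
  have hdisp : ‖v - π y v‖ ^ 2 = 2 - 2 * (⟪π y v, v⟫_ℂ).re := by
    rw [norm_sub_sq (𝕜 := ℂ), hnorm, hv, ← inner_conj_symm]
    simp only [RCLike.re_to_complex, Complex.conj_re]
    ring
  calc ‖⟪π x v, v⟫_ℂ - ⟪π (x * y) v, v⟫_ℂ‖ = ‖⟪π x (v - π y v), v⟫_ℂ‖ := by
        rw [hmul, ContinuousLinearMap.comp_apply, map_sub, inner_sub_left]
    _ ≤ ‖π x (v - π y v)‖ * ‖v‖ := norm_inner_le_norm _ _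
    _ = √(2 - 2 * (⟪π y v, v⟫_ℂ).re) := by
        rw [hnorm, hv, mul_one, ← hdisp, Real.sqrt_sq (norm_nonneg _)]

end NormalizedPosDef

theorem Real.sqrt_le_add_div {t s : ℝ} (ht : 0 ≤ t) (hs : 0 < s) : √t ≤ s + t / s := by
  rw [← sub_le_iff_le_add', le_div_iff₀ hs]
  nlinarith [sq_nonneg (√t - s), Real.sq_sqrt ht, Real.sqrt_nonneg t]

section WeightedAverage

variable {Y : Type*} [MeasurableSpace Y] {μ : Measure Y} {u : Y → ℝ}

theorem norm_sub_integral_mul_ofReal_le {a : ℂ} {h : Y → ℂ} {d : Y → ℝ} (hu : Integrable u μ)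
    (hhu : Integrable (fun y => h y * u y) μ) (hdu : Integrable (fun y => d y * u y) μ)
    (hu0 : ∀ y, 0 ≤ u y) (hu1 : ∫ y, u y ∂μ = 1) (hd : ∀ y, ‖a - h y‖ ≤ d y) :
    ‖a - ∫ y, h y * u y ∂μ‖ ≤ ∫ y, d y * u y ∂μ := by
  have huC : Integrable (fun y => (u y : ℂ)) μ := hu.ofReal
  have hau : ∫ y, a * u y ∂μ = a := by
    rw [integral_const_mul, show ∫ y, (u y : ℂ) ∂μ = ↑(∫ y, u y ∂μ) from integral_ofReal, hu1,
      Complex.ofReal_one, mul_one]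
  calc ‖a - ∫ y, h y * u y ∂μ‖ = ‖∫ y, (a - h y) * u y ∂μ‖ := by
        simp_rw [sub_mul]
        rw [integral_sub (huC.const_mul a) hhu, hau]
    _ ≤ ∫ y, d y * u y ∂μ := by
        refine norm_integral_le_of_norm_le hdu (ae_of_all _ fun y => ?_)
        rw [norm_mul, Complex.norm_real, Real.norm_of_nonneg (hu0 y)]
        exact mul_le_mul_of_nonneg_right (hd y) (hu0 y)

theorem integral_sqrt_mul_le {t : Y → ℝ} (hu : Integrable u μ)
    (htu : Integrable (fun y => t y * u y) μ) (hu0 : ∀ y, 0 ≤ u y) (hu1 : ∫ y, u y ∂μ = 1)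
    (ht : ∀ y, 0 ≤ t y) {s : ℝ} (hs : 0 < s) :
    ∫ y, √(t y) * u y ∂μ ≤ s + (∫ y, t y * u y ∂μ) / s := by
  calc ∫ y, √(t y) * u y ∂μ ≤ ∫ y, (s * u y + s⁻¹ * (t y * u y)) ∂μ := by
        refine integral_mono_of_nonneg
          (ae_of_all _ fun y => mul_nonneg (Real.sqrt_nonneg _) (hu0 y))
          ((hu.const_mul s).add (htu.const_mul s⁻¹)) (ae_of_all _ fun y => ?_)
        calc √(t y) * u y ≤ (s + t y / s) * u y :=
              mul_le_mul_of_nonneg_right (Real.sqrt_le_add_div (ht y) hs) (hu0 y)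
          _ = s * u y + s⁻¹ * (t y * u y) := by ring
    _ = s + (∫ y, t y * u y ∂μ) / s := by
        rw [integral_add (hu.const_mul s) (htu.const_mul s⁻¹), integral_const_mul,
          integral_const_mul, hu1, mul_one, inv_mul_eq_div]

theorem integral_mul_le_of_le_on_support {t : Y → ℝ} {c : ℝ} (hu : Integrable u μ)
    (htu : Integrable (fun y => t y * u y) μ) (hu0 : ∀ y, 0 ≤ u y) (hu1 : ∫ y, u y ∂μ = 1)
    (ht : ∀ y, u y ≠ 0 → t y ≤ c) : ∫ y, t y * u y ∂μ ≤ c := by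
  calc ∫ y, t y * u y ∂μ ≤ ∫ y, c * u y ∂μ := by
        refine integral_mono htu (hu.const_mul c) fun y => ?_
        rcases eq_or_ne (u y) 0 with hy | hy
        · simp [hy]
        · exact mul_le_mul_of_nonneg_right (ht y hy) (hu0 y)
    _ = c := by rw [integral_const_mul, hu1, mul_one]

theorem integral_two_sub_two_re_mul {ψ : Y → ℂ} (hu : Integrable u μ)
    (hψu : Integrable (fun y => ψ y * u y) μ) (hu1 : ∫ y, u y ∂μ = 1) :
    ∫ y, (2 - 2 * (ψ y).re) * u y ∂μ = 2 - 2 * (∫ y, ψ y * u y ∂μ).re := by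
  have hre : ∫ y, (ψ y).re * u y ∂μ = (∫ y, ψ y * u y ∂μ).re := by
    simpa [Complex.re_mul_ofReal] using integral_re hψu
  have hre_int : Integrable (fun y => (ψ y).re * u y) μ := by
    simpa [Complex.re_mul_ofReal] using hψu.re
  simp_rw [sub_mul, mul_assoc]
  rw [integral_sub (hu.const_mul 2) (hre_int.const_mul 2), integral_const_mul,
    integral_const_mul, hu1, hre, mul_one]

theorem tendsto_integral_two_sub_two_re_mul {ι Y : Type*} [MeasurableSpace Y] {μ : Measure Y}
    {u : Y → ℝ} {l : Filter ι} {F : ι → Y → ℂ} {f : Y → ℂ} (hu : Integrable u μ)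
    (hFu : ∀ i, Integrable (fun y => F i y * u y) μ) (hfu : Integrable (fun y => f y * u y) μ)
    (hu1 : ∫ y, u y ∂μ = 1)
    (hlim : Tendsto (fun i => ∫ y, F i y * u y ∂μ) l (𝓝 (∫ y, f y * u y ∂μ))) :
    Tendsto (fun i => ∫ y, (2 - 2 * (F i y).re) * u y ∂μ) l
      (𝓝 (∫ y, (2 - 2 * (f y).re) * u y ∂μ)) := by
  simp_rw [integral_two_sub_two_re_mul hu (hFu _) hu1, integral_two_sub_two_re_mul hu hfu hu1]
  exact tendsto_const_nhds.sub (((Complex.continuous_re.tendsto _).comp hlim).const_mul 2)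

end WeightedAverage

theorem exists_integral_eq_one_support_subset {X : Type*} [TopologicalSpace X] [T4Space X]
    [MeasurableSpace X] [OpensMeasurableSpace X] (μ : Measure X) [IsFiniteMeasure μ]
    [μ.IsOpenPosMeasure] {V : Set X} (hV : IsOpen V) (hne : V.Nonempty) :
    ∃ u : C(X, ℝ), (∀ y, 0 ≤ u y) ∧ ∫ y, u y ∂μ = 1 ∧ Function.support u ⊆ V := by
  obtain ⟨x, hx⟩ := hne
  obtain ⟨u, huV, hux, hu01⟩ := exists_continuous_zero_one_of_isClosed hV.isClosed_compl
    isClosed_singleton (Set.disjoint_singleton_right.2 fun h => h hx)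
  have hu0 (y : X) : 0 ≤ u y := (hu01 y).1
  have hint : Integrable u μ := (integrable_const (1 : ℝ)).mono' u.continuous.aestronglyMeasurable
    (ae_of_all _ fun y => by rw [Real.norm_of_nonneg (hu0 y)]; exact (hu01 y).2)
  have hsupp : Function.support u ⊆ V := fun y hy => by_contra fun h => hy (huV h)
  have hpos : 0 < ∫ y, u y ∂μ := by
    rw [integral_pos_iff_support_of_nonneg hu0 hint]
    refine (isOpen_compl_singleton.preimage u.continuous).measure_pos μ ⟨x, ?_⟩
    simp [hux rfl]
  refine ⟨(∫ y, u y ∂μ)⁻¹ • u, fun y => ?_, ?_, ?_⟩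
  · exact smul_nonneg (inv_nonneg.2 hpos.le) (hu0 y)
  · simp [integral_const_mul, hpos.ne']
  · exact (Function.support_const_smul_subset _ _).trans hsupp

theorem Continuous.integrable_of_compactSpace {X E : Type*} [TopologicalSpace X] [CompactSpace X]
    [MeasurableSpace X] [OpensMeasurableSpace X] [NormedAddCommGroup E] {μ : Measure X}
    [IsFiniteMeasure μ] {g : X → E} (hg : Continuous g) : Integrable g μ :=
  hg.integrable_of_hasCompactSupport (HasCompactSupport.of_compactSpace g)

theorem dist_integral_mul_le {Y : Type*} [TopologicalSpace Y] [CompactSpace Y]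
    [MeasurableSpace Y] [OpensMeasurableSpace Y] (μ : Measure Y) [IsFiniteMeasure μ]
    {F : Y → ℂ} {C : ℝ} (hFc : Continuous F) (hFb : ∀ y, ‖F y‖ ≤ C) (g g' : C(Y, ℂ)) :
    dist (∫ y, F y * g y ∂μ) (∫ y, F y * g' y ∂μ) ≤ C * dist g g' * μ.real Set.univ := by
  have hint (g : C(Y, ℂ)) : Integrable (fun y => F y * g y) μ :=
    (hFc.mul g.continuous).integrable_of_compactSpace
  rw [dist_eq_norm, ← integral_sub (hint g) (hint g')]
  refine norm_integral_le_of_norm_le_const (ae_of_all _ fun y => ?_)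
  rw [← mul_sub, norm_mul, dist_eq_norm]
  exact mul_le_mul (hFb y) ((g - g').norm_coe_le_norm y) (norm_nonneg _)
    ((norm_nonneg _).trans (hFb y))

theorem equicontinuous_integral_mul {ι X Y : Type*} [TopologicalSpace X] [TopologicalSpace Y]
    [CompactSpace Y] [MeasurableSpace Y] [OpensMeasurableSpace Y] (μ : Measure Y)
    [IsFiniteMeasure μ] {F : ι → Y → ℂ} {C : ℝ} (hFc : ∀ i, Continuous (F i))
    (hFb : ∀ i y, ‖F i y‖ ≤ C) {g : X → C(Y, ℂ)} (hg : Continuous g) :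
    Equicontinuous fun i x => ∫ y, F i y * g x y ∂μ := by
  intro x₀
  rw [Metric.equicontinuousAt_iff_right]
  intro ε hε
  have hlim : Tendsto (fun x => C * dist (g x₀) (g x) * μ.real Set.univ) (𝓝 x₀) (𝓝 0) := by
    simpa using (((tendsto_const_nhds (x := g x₀)).dist (hg.tendsto x₀)).const_mul C).mul_const
      (μ.real Set.univ)
  filter_upwards [hlim.eventually (gt_mem_nhds hε)] with x hx i
  exact (dist_integral_mul_le μ (hFc i) (hFb i) _ _).trans_lt hx

theorem continuous_comp_mulLeft_inv {G Z : Type*} [Group G] [TopologicalSpace G]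
    [IsTopologicalGroup G] [TopologicalSpace Z] (g : C(G, Z)) :
    Continuous fun x : G => g.comp ⟨fun z => x⁻¹ * z, by fun_prop⟩ :=
  (ContinuousMap.continuous_postcomp g).comp
    (ContinuousMap.curry ⟨fun p : G × G => p.1⁻¹ * p.2, by fun_prop⟩).continuous

noncomputable def smoothing {G : Type*} [Mul G] [MeasurableSpace G] (μ : Measure G)
    (u : G → ℝ) (ψ : G → ℂ) (x : G) : ℂ :=
  ∫ y, ψ (x * y) * u y ∂μ

theorem smoothing_eq_integral_mul_translate {G : Type*} [Group G] [MeasurableSpace G]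
    [MeasurableMul G] (μ : Measure G) [μ.IsMulLeftInvariant] (u : G → ℝ) (ψ : G → ℂ) (x : G) :
    smoothing μ u ψ x = ∫ z, ψ z * u (x⁻¹ * z) ∂μ := by
  simpa only [smoothing, inv_mul_cancel_left] using
    integral_mul_left_eq_self (μ := μ) (fun z => ψ z * u (x⁻¹ * z)) x

theorem tendstoUniformly_smoothing {G : Type*} [Group G] [TopologicalSpace G]
    [IsTopologicalGroup G] [CompactSpace G] [MeasurableSpace G] [BorelSpace G] (μ : Measure G)
    [IsFiniteMeasure μ] [μ.IsMulLeftInvariant] {ι : Type*} {l : Filter ι} (u : C(G, ℝ))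
    {F : ι → G → ℂ} {f : G → ℂ} {C : ℝ} (hFc : ∀ i, Continuous (F i))
    (hFb : ∀ i x, ‖F i x‖ ≤ C)
    (hweak : ∀ g : C(G, ℂ), Tendsto (fun i => ∫ x, F i x * g x ∂μ) l (𝓝 (∫ x, f x * g x ∂μ))) :
    TendstoUniformly (fun i => smoothing μ u (F i)) (smoothing μ u f) l := by
  set τ : G → C(G, ℂ) := fun x =>
    (ContinuousMap.comp ⟨((↑) : ℝ → ℂ), Complex.continuous_ofReal⟩ u).comp
      ⟨fun z => x⁻¹ * z, by fun_prop⟩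
  have hS (ψ : G → ℂ) : smoothing μ u ψ = fun x => ∫ z, ψ z * τ x z ∂μ :=
    funext (smoothing_eq_integral_mul_translate μ u ψ)
  have hτ : Continuous τ := continuous_comp_mulLeft_inv _
  simp_rw [hS]
  exact UniformFun.tendsto_iff_tendstoUniformly.1 <|
    (equicontinuous_integral_mul μ hFc hFb hτ).tendsto_uniformFun_iff_pi _ _ |>.2 <|
    tendsto_pi_nhds.2 fun x => hweak (τ x)

theorem IsNormalizedPosDefFn.dist_smoothing_le {G : Type*} [Group G] [TopologicalSpace G]
    [IsTopologicalGroup G] [CompactSpace G] [MeasurableSpace G] [BorelSpace G] {μ : Measure G}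
    [IsFiniteMeasure μ] {b : Bool} {φ : G → ℂ} (hφ : IsNormalizedPosDefFn b φ) {u : C(G, ℝ)}
    (hu0 : ∀ y, 0 ≤ u y) (hu1 : ∫ y, u y ∂μ = 1) (x : G) {s : ℝ} (hs : 0 < s) :
    dist (φ x) (smoothing μ u φ x) ≤ s + (∫ y, (2 - 2 * (φ y).re) * u y ∂μ) / s := by
  have hc := hφ.continuous
  calc dist (φ x) (smoothing μ u φ x)
      ≤ ∫ y, √(2 - 2 * (φ y).re) * u y ∂μ := by
        rw [dist_eq_norm]
        exact norm_sub_integral_mul_ofReal_le u.continuous.integrable_of_compactSpace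
          (by fun_prop : Continuous fun y => φ (x * y) * u y).integrable_of_compactSpace
          (by fun_prop : Continuous fun y => √(2 - 2 * (φ y).re) * u y).integrable_of_compactSpace
          hu0 hu1 (hφ.norm_sub_mul_le x)
    _ ≤ s + (∫ y, (2 - 2 * (φ y).re) * u y ∂μ) / s := by
        refine integral_sqrt_mul_le u.continuous.integrable_of_compactSpace
          (by fun_prop : Continuous fun y => (2 - 2 * (φ y).re) * u y).integrable_of_compactSpace
          hu0 hu1 (fun y => ?_) hs
        linarith [(Complex.re_le_norm (φ y)).trans (hφ.norm_le_one y)]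

theorem tendstoUniformly_of_weak_tendsto_posdef_general
    [MeasurableSpace H] [BorelSpace H]
    (μ : Measure H) [IsProbabilityMeasure μ] [μ.IsHaarMeasure]
    {f : H → ℂ} (hf : IsNormalizedPosDefFn true f)
    {ι : Type*} (l : Filter ι) (F : ι → H → ℂ)
    (hF : ∀ α, IsNormalizedPosDefFn false (F α))
    (hweak : ∀ g : C(H, ℂ),
      Tendsto (fun α => ∫ x, F α x * g x ∂μ) l (𝓝 (∫ x, f x * g x ∂μ))) :
    TendstoUniformly F f l := by
  rw [Metric.tendstoUniformly_iff]
  intro ε hε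
  obtain ⟨s, hs, rfl⟩ : ∃ s > 0, ε = 6 * s := ⟨ε / 6, by positivity, by ring⟩
  have hfc := hf.continuous
  obtain ⟨u, hu0, hu1, huV⟩ := exists_integral_eq_one_support_subset μ
    (isOpen_lt (by fun_prop) continuous_const : IsOpen {y | 2 - 2 * (f y).re < s ^ 2})
    ⟨1, by simp [hf.map_one, hs]⟩
  have hu := u.continuous.integrable_of_compactSpace (μ := μ)
  have hint {ψ : H → ℂ} (hψ : Continuous ψ) : Integrable (fun y => ψ y * u y) μ :=
    (by fun_prop : Continuous fun y => ψ y * u y).integrable_of_compactSpace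
  have hDf : ∫ y, (2 - 2 * (f y).re) * u y ∂μ ≤ s ^ 2 :=
    integral_mul_le_of_le_on_support hu
      (by fun_prop : Continuous fun y => (2 - 2 * (f y).re) * u y).integrable_of_compactSpace
      hu0 hu1 fun y hy => (huV hy).le
  have hDF : ∀ᶠ α in l, ∫ y, (2 - 2 * (F α y).re) * u y ∂μ < 2 * s ^ 2 :=
    (tendsto_integral_two_sub_two_re_mul hu (fun α => hint (hF α).continuous) (hint hfc) hu1
      (hweak ⟨fun y => (u y : ℂ), by fun_prop⟩)).eventually_lt_const (by nlinarith)
  have hS := Metric.tendstoUniformly_iff.1 (tendstoUniformly_smoothing μ u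
    (fun α => (hF α).continuous) (fun α => (hF α).norm_le_one) hweak) s hs
  filter_upwards [hDF, hS] with α hDα hSα x
  have hf' := (hf.dist_smoothing_le hu0 hu1 x hs).trans
    (add_le_add_right ((div_le_iff₀ hs).2 (hDf.trans_eq (sq s))) s)
  have hF' := ((hF α).dist_smoothing_le hu0 hu1 x hs).trans_lt
    (add_lt_add_right ((div_lt_iff₀ hs).2 (hDα.trans_eq (by ring : 2 * s ^ 2 = 2 * s * s))) s)
  -- the three legs of the triangle inequality are at most `2 s`, `s` and `3 s`
  linarith [dist_triangle4 (f x) (smoothing μ u f x) (smoothing μ u (F α) x) (F α x),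
    dist_comm (F α x) (smoothing μ u (F α) x), hSα x]

/-- Let `H` be a compact group with normalized Haar measure `λ_H` and let `f` be a
normalized positive definite function associated with an *irreducible* unitary
representation. If `(f_α)` is a net of normalized positive definite functions on `H`
such that `∫ f_α g dλ_H → ∫ f g dλ_H` for every continuous `g`, then `f_α → f`
uniformly on `H`. -/
theorem tendstoUniformly_of_weak_tendsto_posdef
    [MeasurableSpace H] [BorelSpace H]
    (μ : Measure H) [IsProbabilityMeasure μ] [μ.IsHaarMeasure]
    {f : H → ℂ} (hf : IsNormalizedPosDefFn true f)
    {ι : Type*} (l : Filter ι) [l.NeBot] (F : ι → H → ℂ)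
    (hF : ∀ α, IsNormalizedPosDefFn false (F α))
    (hweak : ∀ g : C(H, ℂ),
      Tendsto (fun α => ∫ x, F α x * g x ∂μ) l (𝓝 (∫ x, f x * g x ∂μ))) :
    TendstoUniformly F f l :=
  tendstoUniformly_of_weak_tendsto_posdef_general μ hf l F hF hweak
end

section
/- Let (L;ψ) be a topological dynamical system with L a Stonean (extremally disconnected compact Hausdorff) space. Then the fixed factor L_fix (the Gelfand space of the fixed-point subalgebra fix(T_ψ) ⊂ C(L)) is also Stonean, and the canonical factor map q_fix : L → L_fix is open. -/
/-!
Continuous functions separate the points of `L_fix`, so `q` is constant on orbits. For a clopen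
`U ⊆ L`, the closure `W` of its orbit saturation is clopen (`L` is extremally disconnected) and
invariant, so its indicator is a fixed function, hence factors through `q`; thus `W` is
`q`-saturated, and `q '' U = q '' W` is open because `q` is a quotient map. Clopen sets form a
basis of `L`, so `q` is open, and an open continuous surjection carries extremal disconnectedness
to its image since `closure O = q '' closure (q ⁻¹' O)`.
-/

open Set Topology

theorem eq_of_forall_continuousMap_complex_eq {X : Type*} [TopologicalSpace X] [T35Space X]
    {x y : X} (h : ∀ f : C(X, ℂ), f x = f y) : x = y := by
  by_contra hxy
  obtain ⟨f, hf, hfxy⟩ := separatesPoints_continuous_of_t35Space hxy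
  exact hfxy <| Complex.ofReal_injective <|
    h ⟨fun z => (f z : ℂ), Complex.continuous_ofReal.comp hf⟩

theorem IsOpenMap.extremallyDisconnected {L X : Type*} [TopologicalSpace L] [TopologicalSpace X]
    [ExtremallyDisconnected L] {q : L → X} (hq : IsOpenMap q) (hq_cont : Continuous q)
    (hq_surj : Function.Surjective q) : ExtremallyDisconnected X where
  open_closure O hO := by
    rw [← hq_surj.image_preimage (closure O), hq.preimage_closure_eq_closure_preimage hq_cont]
    exact hq _ (ExtremallyDisconnected.open_closure _ (hO.preimage hq_cont))

section OrbitSaturation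

variable {L G : Type*} [TopologicalSpace L] (ψ : G → L ≃ₜ L)

def orbitSaturation (U : Set L) : Set L := ⋃ t, ψ t ⁻¹' U

variable {ψ}

theorem IsOpen.orbitSaturation {U : Set L} (hU : IsOpen U) : IsOpen (orbitSaturation ψ U) :=
  isOpen_iUnion fun t => hU.preimage (ψ t).continuous

theorem image_orbitSaturation_subset {X : Type*} {q : L → X} (hq : ∀ t x, q (ψ t x) = q x)
    (U : Set L) : q '' orbitSaturation ψ U ⊆ q '' U := by
  rintro _ ⟨x, hx, rfl⟩
  obtain ⟨t, hxt⟩ := mem_iUnion.1 hx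
  exact ⟨ψ t x, hxt, hq t x⟩

variable [Group G] (hψ : ∀ s t : G, ψ (s * t) = (ψ t).trans (ψ s))
include hψ

theorem apply_one_of_map_mul (x : L) : ψ 1 x = x := by
  simpa using (congrArg (· x) (hψ 1 1)).symm

theorem subset_orbitSaturation (U : Set L) : U ⊆ orbitSaturation ψ U :=
  fun x hx => mem_iUnion.2 ⟨1, by simpa [apply_one_of_map_mul hψ] using hx⟩

theorem preimage_orbitSaturation (s : G) (U : Set L) :
    ψ s ⁻¹' orbitSaturation ψ U = orbitSaturation ψ U := by
  simp only [orbitSaturation, preimage_iUnion, ← preimage_comp]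
  have hcomp : ∀ t, ⇑(ψ t) ∘ ⇑(ψ s) = ⇑(ψ (t * s)) := fun t => by rw [hψ]; rfl
  simp only [hcomp]
  exact (Equiv.mulRight s).iSup_comp (g := fun t => ψ t ⁻¹' U)

end OrbitSaturation

section FixedFactor

variable {L G X : Type*} [TopologicalSpace L] [TopologicalSpace X]
  {ψ : G → L ≃ₜ L} {q : L → X}

theorem apply_eq_of_range_comp_subset [T35Space X]
    (hfix : range (fun f : C(X, ℂ) => (f : X → ℂ) ∘ q) ⊆
      {g : L → ℂ | Continuous g ∧ ∀ t : G, g ∘ ⇑(ψ t) = g}) (t : G) (x : L) :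
    q (ψ t x) = q x :=
  eq_of_forall_continuousMap_complex_eq fun f => congrFun ((hfix ⟨f, rfl⟩).2 t) x

theorem preimage_image_eq_of_subset_range_comp
    (hfix : {g : L → ℂ | Continuous g ∧ ∀ t : G, g ∘ ⇑(ψ t) = g} ⊆
      range (fun f : C(X, ℂ) => (f : X → ℂ) ∘ q))
    {W : Set L} (hW : IsClopen W) (hW_inv : ∀ t, ψ t ⁻¹' W = W) : q ⁻¹' (q '' W) = W := by
  obtain ⟨f, hf⟩ := hfix ⟨hW.continuous_indicator (continuous_const (y := (1 : ℂ))),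
    fun t => funext fun x => by rw [Function.comp_apply, ← indicator_comp_right, hW_inv]; rfl⟩
  have hind : ∀ y, f (q y) = W.indicator (fun _ => 1) y := fun y => congrFun hf y
  refine subset_antisymm ?_ (subset_preimage_image q W)
  rintro x ⟨w, hw, hwx⟩
  by_contra hx
  have := hind w
  rw [hwx, hind x, indicator_of_mem hw, indicator_of_notMem hx] at this
  exact zero_ne_one this

theorem isOpen_image_of_isClopen [Group G] [CompactSpace L] [ExtremallyDisconnected L]
    [T2Space X] (hψ : ∀ s t : G, ψ (s * t) = (ψ t).trans (ψ s)) (hq_cont : Continuous q)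
    (hq_surj : Function.Surjective q) (hq_inv : ∀ t x, q (ψ t x) = q x)
    (hfix : {g : L → ℂ | Continuous g ∧ ∀ t : G, g ∘ ⇑(ψ t) = g} ⊆
      range (fun f : C(X, ℂ) => (f : X → ℂ) ∘ q))
    {U : Set L} (hU : IsClopen U) : IsOpen (q '' U) := by
  set W := closure (orbitSaturation ψ U)
  have hW : IsClopen W :=
    ⟨isClosed_closure, ExtremallyDisconnected.open_closure _ hU.isOpen.orbitSaturation⟩
  have hW_inv : ∀ t, ψ t ⁻¹' W = W := fun t => by
    rw [(ψ t).preimage_closure, preimage_orbitSaturation hψ]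
  have hUW : q '' U = q '' W := by
    refine subset_antisymm (image_mono (subset_closure.trans' (subset_orbitSaturation hψ U))) ?_
    calc q '' W ⊆ closure (q '' orbitSaturation ψ U) :=
          image_closure_subset_closure_image hq_cont
      _ ⊆ closure (q '' U) := closure_mono (image_orbitSaturation_subset hq_inv U)
      _ = q '' U := (hU.isClosed.isCompact.image hq_cont).isClosed.closure_eq
  rw [hUW, ← (IsQuotientMap.of_surjective_continuous hq_surj hq_cont).isOpen_preimage,
    preimage_image_eq_of_subset_range_comp hfix hW hW_inv]
  exact hW.isOpen

end FixedFactor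

/-- Let `(L;ψ)` be a topological dynamical system (an action of a discrete group `G` by
homeomorphisms) on a Stonean (extremally disconnected compact Hausdorff) space `L`, and
let `q : L → L_fix` be the canonical factor map onto the fixed factor, i.e. a continuous
surjection onto a compact Hausdorff space such that the pullbacks `f ∘ q` of continuous
functions on `L_fix` are exactly the `ψ`-invariant continuous functions on `L` (so that
`L_fix` is the Gelfand space of the fixed algebra `fix(T_ψ) ⊆ C(L)`). Then `L_fix` is
also Stonean, and `q` is an open map. -/
theorem fixedFactor_stonean_and_open
    {L : Type*} [TopologicalSpace L] [CompactSpace L] [T2Space L]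
    [ExtremallyDisconnected L]
    {G : Type*} [Group G] (ψ : G → L ≃ₜ L)
    (hψ : ∀ s t : G, ψ (s * t) = (ψ t).trans (ψ s))
    {Lfix : Type*} [TopologicalSpace Lfix] [CompactSpace Lfix] [T2Space Lfix]
    (q : L → Lfix) (hq_cont : Continuous q) (hq_surj : Function.Surjective q)
    (hfix : Set.range (fun f : C(Lfix, ℂ) => (f : Lfix → ℂ) ∘ q) =
      {g : L → ℂ | Continuous g ∧ ∀ t : G, g ∘ ⇑(ψ t) = g}) :
    ExtremallyDisconnected Lfix ∧ IsOpenMap q := by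
  have hq_inv := apply_eq_of_range_comp_subset hfix.subset
  have hopen : IsOpenMap q := isTopologicalBasis_isClopen.isOpenMap_iff.2 fun _ hU =>
    isOpen_image_of_isClopen hψ hq_cont hq_surj hq_inv hfix.superset hU
  exact ⟨hopen.extremallyDisconnected hq_cont hq_surj, hopen⟩
end
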